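/- arXiv:2402.12653 — 8 statements merged into one kernel-verified Lean document; each statement's English description precedes it below -/
import Mathlib

section
/- (Proposition 1) Under the full-population Bernoulli design with treatment probability π, the expectation of the Horvitz–Thompson estimator built from Y satisfies E[τ̂¹(π)] = (1/n) Σ_{i ≠ j} (γ_{i,j} + π ζ_{i,j}). -/
open Finset

noncomputable section

/-- Real-valued indicator of a Boolean. -/
def ind (b : Bool) : ℝ := if b then 1 else 0

/-- Dyadic linear potential-outcome model for an ordered pair `(i, j)`:
`z_{i,j}(W) = α_{i,j} + β_{i,j} W_i + γ_{i,j} W_j + ζ_{i,j} W_i W_j`. -/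
def zDyad {n : ℕ} (α β γ ζ : Fin n → Fin n → ℝ) (W : Fin n → ℝ) (i j : Fin n) : ℝ :=
  α i j + β i j * W i + γ i j * W j + ζ i j * W i * W j

/-- Upstream-aggregated outcome `Y_j(W) = Σ_{i ≠ j} z_{i,j}(W)`. -/
def Yagg {n : ℕ} (α β γ ζ : Fin n → Fin n → ℝ) (W : Fin n → ℝ) (j : Fin n) : ℝ :=
  ∑ i ∈ ({j}ᶜ : Finset (Fin n)), zDyad α β γ ζ W i j

/-- Downstream-aggregated outcome (diffusion metric) `D_j(W) = Σ_{i ≠ j} z_{j,i}(W)`. -/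
def Dagg {n : ℕ} (α β γ ζ : Fin n → Fin n → ℝ) (W : Fin n → ℝ) (j : Fin n) : ℝ :=
  ∑ i ∈ ({j}ᶜ : Finset (Fin n)), zDyad α β γ ζ W j i

/-- Expectation over `n` i.i.d. Bernoulli(`q`) treatment assignments: the weighted sum
over all assignment vectors `w ∈ {0,1}^n` with product Bernoulli weights. -/
def expectBern (n : ℕ) (q : ℝ) (f : (Fin n → Bool) → ℝ) : ℝ :=
  ∑ w : Fin n → Bool, (∏ i, if w i then q else 1 - q) * f w

/-- Horvitz–Thompson estimator built from `Y`:
`τ̂¹(q)(w) = (1/n) Σ_i [w_i Y_i(w)/q − (1 − w_i) Y_i(w)/(1 − q)]`. -/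
def tauHat1 {n : ℕ} (α β γ ζ : Fin n → Fin n → ℝ) (q : ℝ) (w : Fin n → Bool) : ℝ :=
  (1 / (n : ℝ)) * ∑ i,
    (ind (w i) * Yagg α β γ ζ (fun k => ind (w k)) i / q -
      (1 - ind (w i)) * Yagg α β γ ζ (fun k => ind (w k)) i / (1 - q))

/-- Horvitz–Thompson estimator built from the diffusion metric `D`:
`τ̂²(q)(w) = (1/n) Σ_i [w_i D_i(w)/q − (1 − w_i) D_i(w)/(1 − q)]`. -/
def tauHat2 {n : ℕ} (α β γ ζ : Fin n → Fin n → ℝ) (q : ℝ) (w : Fin n → Bool) : ℝ :=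
  (1 / (n : ℝ)) * ∑ i,
    (ind (w i) * Dagg α β γ ζ (fun k => ind (w k)) i / q -
      (1 - ind (w i)) * Dagg α β γ ζ (fun k => ind (w k)) i / (1 - q))

/-!
Write `z_{i,j} = (α_{i,j} + β_{i,j} W_i) + W_j (γ_{i,j} + ζ_{i,j} W_i)`. Unit `j` enters
the estimator through the Horvitz–Thompson weight `W_j / π - (1 - W_j) / (1 - π)`, which has
mean `0`, while `W_j` times the weight has mean `1`. Since `W_i` and `W_j` are independent
for `i ≠ j`, each summand of `τ̂¹` therefore has mean `E[γ_{i,j} + ζ_{i,j} W_i] = γ_{i,j} + π ζ_{i,j}`.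
-/

def bernMean (q : ℝ) (u : Bool → ℝ) : ℝ := q * u true + (1 - q) * u false

def htWeight (q : ℝ) (b : Bool) : ℝ := ind b / q - (1 - ind b) / (1 - q)

section BernoulliExpectation

variable {n : ℕ} {q : ℝ}

lemma bernMean_eq_sum (u : Bool → ℝ) :
    bernMean q u = ∑ b, (if b then q else 1 - q) * u b := by
  simp [bernMean]

lemma expectBern_add (f g : (Fin n → Bool) → ℝ) :
    expectBern n q (fun w => f w + g w) = expectBern n q f + expectBern n q g := by
  simp only [expectBern, mul_add, sum_add_distrib]

lemma expectBern_const_mul (c : ℝ) (f : (Fin n → Bool) → ℝ) :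
    expectBern n q (fun w => c * f w) = c * expectBern n q f := by
  simp only [expectBern, mul_sum, mul_left_comm c]

lemma expectBern_sum {ι : Type*} (s : Finset ι) (f : ι → (Fin n → Bool) → ℝ) :
    expectBern n q (fun w => ∑ j ∈ s, f j w) = ∑ j ∈ s, expectBern n q (f j) := by
  simp only [expectBern, mul_sum]
  exact sum_comm

lemma expectBern_prod (g : Fin n → Bool → ℝ) :
    expectBern n q (fun w => ∏ k, g k (w k)) = ∏ k, bernMean q (g k) := by
  simp only [expectBern, bernMean_eq_sum, Fintype.prod_sum, prod_mul_distrib]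

lemma expectBern_mul_of_ne {i j : Fin n} (hij : i ≠ j) (u v : Bool → ℝ) :
    expectBern n q (fun w => u (w i) * v (w j)) = bernMean q u * bernMean q v := by
  have factor := expectBern_prod (q := q)
    fun k b => (if k = i then u b else 1) * (if k = j then v b else 1)
  simp only [prod_mul_distrib, Fintype.prod_ite_eq'] at factor
  rw [factor, ← Fintype.prod_ite_eq' i fun _ => bernMean q u,
    ← Fintype.prod_ite_eq' j fun _ => bernMean q v, ← prod_mul_distrib]
  refine prod_congr rfl fun k _ => ?_
  split_ifs with hki hkj hkj
  · exact absurd (hki.symm.trans hkj) hij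
  all_goals simp [bernMean]

lemma bernMean_htWeight (hq0 : q ≠ 0) (hq1 : q ≠ 1) : bernMean q (htWeight q) = 0 := by
  have : 1 - q ≠ 0 := sub_ne_zero.2 hq1.symm
  simp only [bernMean, htWeight, ind, if_true, Bool.false_eq_true, if_false]
  field_simp
  ring

lemma bernMean_ind_mul_htWeight (hq0 : q ≠ 0) :
    bernMean q (fun b => ind b * htWeight q b) = 1 := by
  simp [bernMean, htWeight, ind, hq0]

variable (α β γ ζ : Fin n → Fin n → ℝ)

lemma tauHat1_eq_sum_htWeight_mul_zDyad (w : Fin n → Bool) :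
    tauHat1 α β γ ζ q w = 1 / n * ∑ j, ∑ i ∈ ({j}ᶜ : Finset (Fin n)),
      htWeight q (w j) * zDyad α β γ ζ (fun k => ind (w k)) i j := by
  unfold tauHat1
  congr 1
  refine sum_congr rfl fun j _ => ?_
  rw [← mul_sum]
  change _ = htWeight q (w j) * Yagg α β γ ζ _ j
  unfold htWeight
  ring

lemma expectBern_htWeight_mul_zDyad (hq0 : q ≠ 0) (hq1 : q ≠ 1) {i j : Fin n} (hij : i ≠ j) :
    expectBern n q (fun w => htWeight q (w j) * zDyad α β γ ζ (fun k => ind (w k)) i j) =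
      γ i j + q * ζ i j := by
  have split :
      (fun w : Fin n → Bool => htWeight q (w j) * zDyad α β γ ζ (fun k => ind (w k)) i j) =
        fun w => (α i j + β i j * ind (w i)) * htWeight q (w j) +
          (γ i j + ζ i j * ind (w i)) * (ind (w j) * htWeight q (w j)) := by
    funext w
    simp only [zDyad]
    ring
  rw [split, expectBern_add, expectBern_mul_of_ne hij (fun b => α i j + β i j * ind b),
    expectBern_mul_of_ne hij (fun b => γ i j + ζ i j * ind b) (fun b => ind b * htWeight q b),
    bernMean_htWeight hq0 hq1, bernMean_ind_mul_htWeight hq0]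
  simp only [bernMean, ind, ↓reduceIte, mul_one, Bool.false_eq_true, mul_zero, add_zero, zero_add]
  ring

end BernoulliExpectation

theorem expect_tauHat1_general
    (n : ℕ) (α β γ ζ : Fin n → Fin n → ℝ)
    (q : ℝ) (hq0 : 0 < q) (hq1 : q < 1) :
    expectBern n q (tauHat1 α β γ ζ q) =
      (1 / (n : ℝ)) * ∑ j, ∑ i ∈ ({j}ᶜ : Finset (Fin n)), (γ i j + q * ζ i j) := by
  rw [funext (tauHat1_eq_sum_htWeight_mul_zDyad α β γ ζ), expectBern_const_mul, expectBern_sum]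
  congr 1
  refine sum_congr rfl fun j _ => ?_
  rw [expectBern_sum]
  refine sum_congr rfl fun i hi => ?_
  exact expectBern_htWeight_mul_zDyad α β γ ζ hq0.ne' hq1.ne (by simpa using hi)

/-- Proposition 1: Under the full-population Bernoulli design with
treatment probability `q`, `E[τ̂¹(q)] = (1/n) Σ_{i ≠ j} (γ_{i,j} + q ζ_{i,j})`. -/
theorem expect_tauHat1
    (n : ℕ) (hn : 1 ≤ n) (α β γ ζ : Fin n → Fin n → ℝ)
    (q : ℝ) (hq0 : 0 < q) (hq1 : q < 1) :
    expectBern n q (tauHat1 α β γ ζ q) =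
      (1 / (n : ℝ)) * ∑ j, ∑ i ∈ ({j}ᶜ : Finset (Fin n)), (γ i j + q * ζ i j) :=
  expect_tauHat1_general n α β γ ζ q hq0 hq1
end
end

section
/- (Proposition 2) Under the full-population Bernoulli design with treatment probability π, the expectation of the Horvitz–Thompson estimator built from the diffusion metric D satisfies E[τ̂²(π)] = (1/n) Σ_{i ≠ j} (β_{i,j} + π ζ_{i,j}). -/
open Finset

noncomputable section

lemma sum_prod_bool {n : ℕ} (g : Fin n → Bool → ℝ) :
    ∑ w : Fin n → Bool, ∏ i, g i (w i) = ∏ i, (g i true + g i false) := by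
  have h := Finset.prod_univ_sum (fun _ : Fin n => (Finset.univ : Finset Bool)) g
  simp only [Fintype.piFinset_univ] at h
  rw [← h]
  exact Finset.prod_congr rfl fun i _ => by simp [Fintype.sum_bool]

lemma expectConstB {n : ℕ} (q : ℝ) :
    ∑ w : Fin n → Bool, (∏ i, if w i then q else 1 - q) = 1 := by
  have := sum_prod_bool (n := n) (fun _ b => if b then q else 1 - q)
  simpa using this

lemma expectIndB {n : ℕ} (q : ℝ) (a : Fin n) :
    ∑ w : Fin n → Bool, (∏ i, if w i then q else 1 - q) * ind (w a) = q := by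
  have hrw : ∀ w : Fin n → Bool,
      (∏ i, if w i then q else 1 - q) * ind (w a)
        = ∏ i, ((if w i then q else 1 - q) * (if i = a then ind (w i) else 1)) := by
    intro w
    rw [Finset.prod_mul_distrib, Finset.prod_ite_eq' Finset.univ a (fun i => ind (w i))]
    simp
  simp only [hrw]
  rw [sum_prod_bool (fun i b => (if b then q else 1 - q) * (if i = a then ind b else 1))]
  have : ∀ i : Fin n, ((if (true:Bool) then q else 1 - q) * (if i = a then ind true else 1)
      + (if (false:Bool) then q else 1 - q) * (if i = a then ind false else 1))
      = if i = a then q else 1 := by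
    intro i; by_cases h : i = a <;> simp [h, ind]
  rw [Finset.prod_congr rfl fun i _ => this i]
  simp [Finset.prod_ite_eq' Finset.univ a (fun _ => q)]

lemma expectInd2B {n : ℕ} (q : ℝ) (a b : Fin n) (hab : a ≠ b) :
    ∑ w : Fin n → Bool, (∏ i, if w i then q else 1 - q) * (ind (w a) * ind (w b)) = q * q := by
  have hrw : ∀ w : Fin n → Bool,
      (∏ i, if w i then q else 1 - q) * (ind (w a) * ind (w b))
        = ∏ i, ((if w i then q else 1 - q)
            * ((if i = a then ind (w i) else 1) * (if i = b then ind (w i) else 1))) := by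
    intro w
    rw [Finset.prod_mul_distrib, Finset.prod_mul_distrib,
      Finset.prod_ite_eq' Finset.univ a (fun i => ind (w i)),
      Finset.prod_ite_eq' Finset.univ b (fun i => ind (w i))]
    simp
  simp only [hrw]
  rw [sum_prod_bool (fun i c => (if c then q else 1 - q) * ((if i = a then ind c else 1) * (if i = b then ind c else 1)))]
  have : ∀ i : Fin n,
      ((if (true:Bool) then q else 1 - q) * ((if i = a then ind true else 1) * (if i = b then ind true else 1))
      + (if (false:Bool) then q else 1 - q) * ((if i = a then ind false else 1) * (if i = b then ind false else 1)))
      = (if i = a then q else 1) * (if i = b then q else 1) := by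
    intro i
    by_cases h1 : i = a <;> by_cases h2 : i = b
    · exact absurd (h1 ▸ h2) hab
    all_goals simp [h1, h2, ind, hab, Ne.symm hab]
  rw [Finset.prod_congr rfl fun i _ => this i, Finset.prod_mul_distrib]
  simp [Finset.prod_ite_eq' Finset.univ a (fun _ => q), Finset.prod_ite_eq' Finset.univ b (fun _ => q)]

lemma key {n : ℕ} (q : ℝ) (hq0 : q ≠ 0) (hq1 : (1:ℝ) - q ≠ 0) (A B C Z : ℝ)
    (a b : Fin n) (hab : a ≠ b) :
    ∑ w : Fin n → Bool, (∏ i, if w i then q else 1 - q) *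
      (ind (w a) * (A + B * ind (w a) + C * ind (w b) + Z * ind (w a) * ind (w b)) / q -
       (1 - ind (w a)) * (A + B * ind (w a) + C * ind (w b) + Z * ind (w a) * ind (w b)) / (1 - q))
    = B + q * Z := by
  set c0 : ℝ := -(A/(1-q)) with hc0
  set c1 : ℝ := A/q + B/q + A/(1-q) with hc1
  set c2 : ℝ := -(C/(1-q)) with hc2
  set c3 : ℝ := C/q + Z/q + C/(1-q) with hc3
  have hrw : ∀ w : Fin n → Bool,
      (ind (w a) * (A + B * ind (w a) + C * ind (w b) + Z * ind (w a) * ind (w b)) / q -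
       (1 - ind (w a)) * (A + B * ind (w a) + C * ind (w b) + Z * ind (w a) * ind (w b)) / (1 - q))
      = c0 + c1 * ind (w a) + c2 * ind (w b) + c3 * (ind (w a) * ind (w b)) := by
    intro w
    rw [hc0, hc1, hc2, hc3]
    cases hwa : w a <;> cases hwb : w b <;> simp [ind] <;> field_simp <;> ring
  calc ∑ w : Fin n → Bool, (∏ i, if w i then q else 1 - q) *
      (ind (w a) * (A + B * ind (w a) + C * ind (w b) + Z * ind (w a) * ind (w b)) / q -
       (1 - ind (w a)) * (A + B * ind (w a) + C * ind (w b) + Z * ind (w a) * ind (w b)) / (1 - q))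
      = ∑ w : Fin n → Bool,
        ((∏ i, if w i then q else 1 - q) * c0
          + ((∏ i, if w i then q else 1 - q) * ind (w a)) * c1
          + ((∏ i, if w i then q else 1 - q) * ind (w b)) * c2
          + ((∏ i, if w i then q else 1 - q) * (ind (w a) * ind (w b))) * c3) := by
        refine Finset.sum_congr rfl fun w _ => ?_
        rw [hrw w]; ring
    _ = (∑ w : Fin n → Bool, (∏ i, if w i then q else 1 - q)) * c0
          + (∑ w : Fin n → Bool, (∏ i, if w i then q else 1 - q) * ind (w a)) * c1
          + (∑ w : Fin n → Bool, (∏ i, if w i then q else 1 - q) * ind (w b)) * c2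
          + (∑ w : Fin n → Bool, (∏ i, if w i then q else 1 - q) * (ind (w a) * ind (w b))) * c3 := by
        simp [Finset.sum_add_distrib, Finset.sum_mul]
    _ = 1 * c0 + q * c1 + q * c2 + (q * q) * c3 := by
        rw [expectConstB, expectIndB, expectIndB, expectInd2B q a b hab]
    _ = B + q * Z := by
        rw [hc0, hc1, hc2, hc3]; field_simp; ring

lemma pullConst {I : Type*} (s : Finset I) (c : ℝ) (f g : I → ℝ) :
    ∑ x ∈ s, f x * (c * g x) = c * ∑ x ∈ s, f x * g x := by
  rw [Finset.mul_sum]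
  exact Finset.sum_congr rfl fun x _ => by ring

/-- Proposition 2: Under the full-population Bernoulli design with
treatment probability `q`, `E[τ̂²(q)] = (1/n) Σ_{i ≠ j} (β_{i,j} + q ζ_{i,j})`. -/
theorem expect_tauHat2
    (n : ℕ) (hn : 1 ≤ n) (α β γ ζ : Fin n → Fin n → ℝ)
    (q : ℝ) (hq0 : 0 < q) (hq1 : q < 1) :
    expectBern n q (tauHat2 α β γ ζ q) =
      (1 / (n : ℝ)) * ∑ j, ∑ i ∈ ({j}ᶜ : Finset (Fin n)), (β i j + q * ζ i j) := by
  have hq0' : q ≠ 0 := ne_of_gt hq0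
  have hq1' : (1:ℝ) - q ≠ 0 := ne_of_gt (by linarith)
  have hstep1 : ∀ (w : Fin n → Bool) (j : Fin n),
      ind (w j) * (∑ i ∈ ({j}ᶜ : Finset (Fin n)),
          (α j i + β j i * ind (w j) + γ j i * ind (w i) + ζ j i * ind (w j) * ind (w i))) / q -
      (1 - ind (w j)) * (∑ i ∈ ({j}ᶜ : Finset (Fin n)),
          (α j i + β j i * ind (w j) + γ j i * ind (w i) + ζ j i * ind (w j) * ind (w i))) / (1 - q)
      = ∑ i ∈ ({j}ᶜ : Finset (Fin n)),
          (ind (w j) * (α j i + β j i * ind (w j) + γ j i * ind (w i) + ζ j i * ind (w j) * ind (w i)) / q -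
           (1 - ind (w j)) * (α j i + β j i * ind (w j) + γ j i * ind (w i) + ζ j i * ind (w j) * ind (w i)) / (1 - q)) := by
    intro w j
    rw [Finset.mul_sum, Finset.mul_sum, Finset.sum_div, Finset.sum_div, ← Finset.sum_sub_distrib]
  simp only [expectBern, tauHat2, Dagg, zDyad]
  simp only [hstep1]
  simp only [Finset.mul_sum]
  rw [Finset.sum_comm]
  calc ∑ j, ∑ w : Fin n → Bool, ∑ i ∈ ({j}ᶜ : Finset (Fin n)),
        (∏ k, if w k then q else 1 - q) *
        (1 / (n:ℝ) *
          (ind (w j) * (α j i + β j i * ind (w j) + γ j i * ind (w i) + ζ j i * ind (w j) * ind (w i)) / q -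
           (1 - ind (w j)) * (α j i + β j i * ind (w j) + γ j i * ind (w i) + ζ j i * ind (w j) * ind (w i)) / (1 - q)))
      = ∑ j, ∑ i ∈ ({j}ᶜ : Finset (Fin n)), 1 / (n:ℝ) * (β j i + q * ζ j i) := by
        refine Finset.sum_congr rfl fun j _ => ?_
        rw [Finset.sum_comm]
        refine Finset.sum_congr rfl fun i hi => ?_
        have hij : j ≠ i := by
          simp only [Finset.mem_compl, Finset.mem_singleton] at hi
          exact fun h => hi h.symm
        rw [pullConst, key q hq0' hq1' (α j i) (β j i) (γ j i) (ζ j i) j i hij]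
    _ = ∑ j, ∑ i ∈ ({j}ᶜ : Finset (Fin n)), 1 / (n:ℝ) * (β i j + q * ζ i j) := by
        refine Finset.sum_comm' ?_
        intro x y
        simp only [Finset.mem_univ, true_and, and_true, Finset.mem_compl, Finset.mem_singleton]
        exact ne_comm
end
end

section
/- (Theorem 1, unbiasedness at π = 1/2) Under the full-population Bernoulli design with treatment probability π = 1/2, the estimator τ̂(1/2) = τ̂¹(1/2) + τ̂²(1/2) is an unbiased estimator of the total treatment effect: E[τ̂(1/2)] = τ, where τ = (1/n) Σ_{j=1}^n (Y_j(1) − Y_j(0)). -/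
open Finset

noncomputable section

lemma sum_flip_zero {n : ℕ} (k : Fin n) (f : (Fin n → Bool) → ℝ)
    (hf : ∀ w, f (Function.update w k (!(w k))) = - f w) :
    ∑ w : Fin n → Bool, f w = 0 := by
  refine Finset.sum_ninvolution (fun w => Function.update w k (!(w k))) ?_ ?_
    (fun _ => Finset.mem_univ _) ?_
  · intro w; rw [hf]; ring
  · intro w _ h
    have := congrFun h k
    simp at this
  · intro w
    simp [Function.update_idem]

lemma sum_sign_mul {n : ℕ} (k : Fin n) (g : (Fin n → Bool) → ℝ)
    (hg : ∀ w b, g (Function.update w k b) = g w) :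
    ∑ w : Fin n → Bool, (2 * ind (w k) - 1) * g w = 0 := by
  apply sum_flip_zero k
  intro w
  rw [hg, Function.update_self]
  cases h : w k <;> simp [ind, h] <;> ring

lemma sum_one (n : ℕ) : ∑ _w : Fin n → Bool, (1 : ℝ) = 2 ^ n := by
  simp [Finset.card_univ]

lemma sum_ind {n : ℕ} (k : Fin n) :
    ∑ w : Fin n → Bool, ind (w k) = 2 ^ n / 2 := by
  have h0 := sum_sign_mul k (fun _ => (1 : ℝ)) (fun _ _ => rfl)
  have h1 := sum_one n
  have : ∀ w : Fin n → Bool, ind (w k) = ((2 * ind (w k) - 1) * 1) / 2 + 1 / 2 * 1 := by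
    intro w; ring
  rw [Finset.sum_congr rfl fun w _ => this w, Finset.sum_add_distrib, ← Finset.sum_div, h0,
    ← Finset.mul_sum, h1]
  ring

lemma sum_ind_mul {n : ℕ} (i k : Fin n) (hik : i ≠ k) :
    ∑ w : Fin n → Bool, ind (w i) * ind (w k) = 2 ^ n / 4 := by
  have hi := sum_sign_mul i (fun _ => (1 : ℝ)) (fun _ _ => rfl)
  have hk := sum_sign_mul k (fun _ => (1 : ℝ)) (fun _ _ => rfl)
  have hik2 := sum_sign_mul k (fun w => 2 * ind (w i) - 1)
    (fun w b => by show 2 * ind (Function.update w k b i) - 1 = _; rw [Function.update_of_ne hik])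
  have h1 := sum_one n
  have : ∀ w : Fin n → Bool, ind (w i) * ind (w k) =
      ((2 * ind (w k) - 1) * (2 * ind (w i) - 1)) / 4 + ((2 * ind (w i) - 1) * 1) / 4
        + ((2 * ind (w k) - 1) * 1) / 4 + 1 / 4 * 1 := by
    intro w; ring
  rw [Finset.sum_congr rfl fun w _ => this w]
  rw [Finset.sum_add_distrib, Finset.sum_add_distrib, Finset.sum_add_distrib,
    ← Finset.sum_div, ← Finset.sum_div, ← Finset.sum_div, ← Finset.mul_sum,
    hik2, hi, hk, h1]
  ring

lemma sum_sign_z1 {n : ℕ} (α β γ ζ : Fin n → Fin n → ℝ) (i k : Fin n) (hik : i ≠ k) :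
    ∑ w : Fin n → Bool, (2 * ind (w k) - 1) * zDyad α β γ ζ (fun j => ind (w j)) i k
      = 2 ^ n * (γ i k / 2 + ζ i k / 4) := by
  have key : ∀ w : Fin n → Bool,
      (2 * ind (w k) - 1) * zDyad α β γ ζ (fun j => ind (w j)) i k
        = (2 * ind (w k) - 1) * (α i k + β i k * ind (w i))
          + γ i k * ind (w k) + ζ i k * (ind (w i) * ind (w k)) := by
    intro w
    unfold zDyad
    cases h : w k <;> simp [ind, h] <;> ring
  rw [Finset.sum_congr rfl fun w _ => key w, Finset.sum_add_distrib, Finset.sum_add_distrib,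
    ← Finset.mul_sum, ← Finset.mul_sum,
    sum_sign_mul k (fun w => α i k + β i k * ind (w i))
      (fun w b => by
        show α i k + β i k * ind (Function.update w k b i) = _
        rw [Function.update_of_ne hik]),
    sum_ind k, sum_ind_mul i k hik]
  ring

lemma sum_sign_z2 {n : ℕ} (α β γ ζ : Fin n → Fin n → ℝ) (i k : Fin n) (hik : i ≠ k) :
    ∑ w : Fin n → Bool, (2 * ind (w k) - 1) * zDyad α β γ ζ (fun j => ind (w j)) k i
      = 2 ^ n * (β k i / 2 + ζ k i / 4) := by
  have key : ∀ w : Fin n → Bool,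
      (2 * ind (w k) - 1) * zDyad α β γ ζ (fun j => ind (w j)) k i
        = (2 * ind (w k) - 1) * (α k i + γ k i * ind (w i))
          + β k i * ind (w k) + ζ k i * (ind (w i) * ind (w k)) := by
    intro w
    unfold zDyad
    cases h : w k <;> simp [ind, h] <;> ring
  rw [Finset.sum_congr rfl fun w _ => key w, Finset.sum_add_distrib, Finset.sum_add_distrib,
    ← Finset.mul_sum, ← Finset.mul_sum,
    sum_sign_mul k (fun w => α k i + γ k i * ind (w i))
      (fun w b => by
        show α k i + γ k i * ind (Function.update w k b i) = _
        rw [Function.update_of_ne hik]),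
    sum_ind k, sum_ind_mul i k hik]
  ring

lemma sum_compl_comm {n : ℕ} (f : Fin n → Fin n → ℝ) :
    ∑ k, ∑ i ∈ ({k}ᶜ : Finset (Fin n)), f k i
      = ∑ i, ∑ k ∈ ({i}ᶜ : Finset (Fin n)), f k i := by
  apply Finset.sum_comm'
  intro x y
  simp [ne_comm]

/-- Theorem 1, unbiasedness at `π = 1/2`: Under the full-population
Bernoulli design with treatment probability `1/2`, the combined estimator
`τ̂(1/2) = τ̂¹(1/2) + τ̂²(1/2)` is unbiased for the total treatment effect
`τ = (1/n) Σ_j (Y_j(1) − Y_j(0))`. -/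
theorem tauHat_unbiased_at_half
    (n : ℕ) (hn : 1 ≤ n) (α β γ ζ : Fin n → Fin n → ℝ) :
    expectBern n (1 / 2)
        (fun w => tauHat1 α β γ ζ (1 / 2) w + tauHat2 α β γ ζ (1 / 2) w) =
      (1 / (n : ℝ)) *
        ∑ j, (Yagg α β γ ζ (fun _ => (1 : ℝ)) j - Yagg α β γ ζ (fun _ => (0 : ℝ)) j) := by
  have hprod : ∀ w : Fin n → Bool,
      (∏ i, if w i then (1 / 2 : ℝ) else 1 - 1 / 2) = (1 / 2 : ℝ) ^ n := by
    intro w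
    rw [Finset.prod_congr rfl fun i _ => (by cases w i <;> norm_num :
        (if w i then (1 / 2 : ℝ) else 1 - 1 / 2) = 1 / 2), Finset.prod_const]
    simp
  -- pointwise rewrite of the estimator
  have hest : ∀ w : Fin n → Bool,
      tauHat1 α β γ ζ (1 / 2) w + tauHat2 α β γ ζ (1 / 2) w
        = (1 / (n : ℝ)) * ∑ k, ∑ i ∈ ({k}ᶜ : Finset (Fin n)),
            ((2 * ind (w k) - 1) * zDyad α β γ ζ (fun j => ind (w j)) i k * 2
              + (2 * ind (w k) - 1) * zDyad α β γ ζ (fun j => ind (w j)) k i * 2) := by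
    intro w
    unfold tauHat1 tauHat2
    rw [← mul_add, ← Finset.sum_add_distrib]
    congr 1
    apply Finset.sum_congr rfl
    intro k _
    have hY : ind (w k) * Yagg α β γ ζ (fun j => ind (w j)) k / (1 / 2)
        - (1 - ind (w k)) * Yagg α β γ ζ (fun j => ind (w j)) k / (1 - 1 / 2)
        = (2 * ind (w k) - 1) * Yagg α β γ ζ (fun j => ind (w j)) k * 2 := by ring
    have hD : ind (w k) * Dagg α β γ ζ (fun j => ind (w j)) k / (1 / 2)
        - (1 - ind (w k)) * Dagg α β γ ζ (fun j => ind (w j)) k / (1 - 1 / 2)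
        = (2 * ind (w k) - 1) * Dagg α β γ ζ (fun j => ind (w j)) k * 2 := by ring
    rw [hY, hD]
    unfold Yagg Dagg
    rw [Finset.mul_sum, Finset.mul_sum, Finset.sum_mul, Finset.sum_mul,
      ← Finset.sum_add_distrib]
  unfold expectBern
  calc ∑ w : Fin n → Bool, (∏ i, if w i then (1/2:ℝ) else 1 - 1/2) *
        (tauHat1 α β γ ζ (1 / 2) w + tauHat2 α β γ ζ (1 / 2) w)
      = ∑ w : Fin n → Bool, (1 / 2 : ℝ) ^ n * ((1 / (n : ℝ)) *
          ∑ k, ∑ i ∈ ({k}ᶜ : Finset (Fin n)),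
            ((2 * ind (w k) - 1) * zDyad α β γ ζ (fun j => ind (w j)) i k * 2
              + (2 * ind (w k) - 1) * zDyad α β γ ζ (fun j => ind (w j)) k i * 2)) := by
        exact Finset.sum_congr rfl fun w _ => by rw [hprod w, hest w]
    _ = (1 / 2 : ℝ) ^ n * ((1 / (n : ℝ)) *
          ∑ k, ∑ i ∈ ({k}ᶜ : Finset (Fin n)), ∑ w : Fin n → Bool,
            ((2 * ind (w k) - 1) * zDyad α β γ ζ (fun j => ind (w j)) i k * 2
              + (2 * ind (w k) - 1) * zDyad α β γ ζ (fun j => ind (w j)) k i * 2)) := by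
        rw [← Finset.mul_sum, ← Finset.mul_sum]
        congr 2
        rw [Finset.sum_comm]
        exact Finset.sum_congr rfl fun k _ => Finset.sum_comm
    _ = (1 / 2 : ℝ) ^ n * ((1 / (n : ℝ)) *
          ∑ k, ∑ i ∈ ({k}ᶜ : Finset (Fin n)),
            (2 : ℝ) ^ n * ((γ i k + ζ i k / 2) + (β k i + ζ k i / 2))) := by
        congr 2
        apply Finset.sum_congr rfl
        intro k _
        apply Finset.sum_congr rfl
        intro i hi
        have hik : i ≠ k := by simpa using hi
        rw [Finset.sum_add_distrib, ← Finset.sum_mul, ← Finset.sum_mul,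
          sum_sign_z1 α β γ ζ i k hik, sum_sign_z2 α β γ ζ i k hik]
        ring
    _ = (1 / (n : ℝ)) * ∑ k, ∑ i ∈ ({k}ᶜ : Finset (Fin n)),
            ((γ i k + ζ i k / 2) + (β k i + ζ k i / 2)) := by
        have h2 : ((1:ℝ)/2) ^ n * (2:ℝ) ^ n = 1 := by
          rw [← mul_pow]; norm_num
        rw [Finset.sum_congr rfl fun k _ => (Finset.mul_sum _ _ _).symm, ← Finset.mul_sum]
        rw [show ∀ a b : ℝ, ((1:ℝ)/2)^n * (1/(n:ℝ) * ((2:ℝ)^n * a)) = (((1:ℝ)/2)^n * (2:ℝ)^n) * (1/(n:ℝ) * a) from fun a b => by ring]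
        · rw [h2, one_mul]
        · exact 0
    _ = (1 / (n : ℝ)) *
        ∑ j, (Yagg α β γ ζ (fun _ => (1 : ℝ)) j - Yagg α β γ ζ (fun _ => (0 : ℝ)) j) := by
        congr 1
        have hR : ∀ j, Yagg α β γ ζ (fun _ => (1 : ℝ)) j - Yagg α β γ ζ (fun _ => (0 : ℝ)) j
            = ∑ i ∈ ({j}ᶜ : Finset (Fin n)), (β i j + γ i j + ζ i j) := by
          intro j
          unfold Yagg
          rw [← Finset.sum_sub_distrib]
          exact Finset.sum_congr rfl fun i _ => by unfold zDyad; ring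
        rw [Finset.sum_congr rfl fun j _ => hR j]
        rw [Finset.sum_congr rfl fun k (_ : k ∈ univ) => Finset.sum_add_distrib,
          Finset.sum_add_distrib]
        rw [sum_compl_comm (fun k i => β k i + ζ k i / 2)]
        rw [← Finset.sum_add_distrib]
        apply Finset.sum_congr rfl
        intro j _
        rw [← Finset.sum_add_distrib]
        exact Finset.sum_congr rfl fun i _ => by ring
end
end

section
/- (Self-loop bias claim) Suppose the dyadic model is extended to allow nonzero diagonal outcomes z_{i,i}(W) = α_{i,i} + β_{i,i} W_i + γ_{i,i} W_i + ζ_{i,i} W_i (with Y_j(W) = Σ_{i=1}^n z_{i,j}(W) and D_j(W) = Σ_{i=1}^n z_{j,i}(W) now including the diagonal term). Then under the full-population Bernoulli design with treatment probability π = 1/2, the estimator τ̂(1/2) = τ̂¹(1/2) + τ̂²(1/2) of the total treatment effect τ = (1/n) Σ_{j=1}^n (Y_j(1) − Y_j(0)) (which includes the diagonal terms) satisfies E[τ̂(1/2)] = τ + (1/n) Σ_{i=1}^n (β_{i,i} + γ_{i,i} + ζ_{i,i}), so that |E[τ̂(1/2)] − τ| = (1/n)|Σ_{i=1}^n (β_{i,i}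 + γ_{i,i} + ζ_{i,i})|. -/
open Finset

noncomputable section

/-- Upstream-aggregated outcome including the diagonal term:
`Y_j(W) = Σ_{i=1}^n z_{i,j}(W)`. -/
def YaggFull {n : ℕ} (α β γ ζ : Fin n → Fin n → ℝ) (W : Fin n → ℝ) (j : Fin n) : ℝ :=
  ∑ i, zDyad α β γ ζ W i j

/-- Downstream-aggregated outcome including the diagonal term:
`D_j(W) = Σ_{i=1}^n z_{j,i}(W)`. -/
def DaggFull {n : ℕ} (α β γ ζ : Fin n → Fin n → ℝ) (W : Fin n → ℝ) (j : Fin n) : ℝ :=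
  ∑ i, zDyad α β γ ζ W j i

/-- Horvitz–Thompson estimator built from `Y` (diagonal included). -/
def tauHat1Full {n : ℕ} (α β γ ζ : Fin n → Fin n → ℝ) (q : ℝ) (w : Fin n → Bool) : ℝ :=
  (1 / (n : ℝ)) * ∑ i,
    (ind (w i) * YaggFull α β γ ζ (fun k => ind (w k)) i / q -
      (1 - ind (w i)) * YaggFull α β γ ζ (fun k => ind (w k)) i / (1 - q))

/-- Horvitz–Thompson estimator built from `D` (diagonal included). -/
def tauHat2Full {n : ℕ} (α β γ ζ : Fin n → Fin n → ℝ) (q : ℝ) (w : Fin n → Bool) : ℝ :=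
  (1 / (n : ℝ)) * ∑ i,
    (ind (w i) * DaggFull α β γ ζ (fun k => ind (w k)) i / q -
      (1 - ind (w i)) * DaggFull α β γ ζ (fun k => ind (w k)) i / (1 - q))

lemma sum_pi_bool' {n : ℕ} (f : Fin n → Bool → ℝ) :
    ∑ w : Fin n → Bool, ∏ i, f i (w i) = ∏ i, (f i false + f i true) := by
  induction n with
  | zero => simp
  | succ m ih =>
    rw [← ((Fin.consEquiv (fun _ : Fin (m+1) => Bool)).sum_comp
      (fun w => ∏ i, f i (w i))), Fintype.sum_prod_type]
    simp only [Fin.consEquiv_apply, Fin.prod_univ_succ, Fin.cons_zero, Fin.cons_succ]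
    rw [Fintype.sum_bool]
    simp only [← Finset.mul_sum, ih]
    ring

lemma bern_hE1 {n : ℕ} : ∑ _w : Fin n → Bool, ((1:ℝ)/2)^n = 1 := by
  rw [Finset.sum_const, Finset.card_univ]
  simp only [Fintype.card_fun, Fintype.card_bool, Fintype.card_fin, nsmul_eq_mul]
  push_cast
  rw [← mul_pow]
  norm_num

lemma bern_hEx {n : ℕ} (i : Fin n) :
    ∑ w : Fin n → Bool, ((1:ℝ)/2)^n * ind (w i) = 1/2 := by
  have h : ∀ w : Fin n → Bool, ((1:ℝ)/2)^n * ind (w i)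
      = ∏ j, ((1/2) * (if j = i then ind (w j) else 1)) := by
    intro w
    rw [Finset.prod_mul_distrib, Finset.prod_const, Finset.card_univ, Fintype.card_fin,
      Finset.prod_ite_eq' Finset.univ i (fun j => ind (w j))]
    simp
  rw [Finset.sum_congr rfl (fun w _ => h w),
    sum_pi_bool' (fun j b => (1/2) * (if j = i then ind b else 1))]
  have h2 : ∀ j : Fin n, ((1:ℝ)/2) * (if j = i then ind false else 1)
      + (1/2) * (if j = i then ind true else 1) = if j = i then 1/2 else 1 := by
    intro j; split <;> norm_num [ind]
  rw [Finset.prod_congr rfl (fun j _ => h2 j),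
    Finset.prod_ite_eq' Finset.univ i (fun _ => (1/2 : ℝ))]
  simp

lemma bern_hExx {n : ℕ} (i k : Fin n) :
    ∑ w : Fin n → Bool, ((1:ℝ)/2)^n * (ind (w i) * ind (w k))
    = if i = k then 1/2 else 1/4 := by
  by_cases hik : i = k
  · subst hik
    rw [if_pos rfl]
    have h0 : ∀ w : Fin n → Bool, ind (w i) * ind (w i) = ind (w i) := by
      intro w; cases h : w i <;> simp [ind]
    rw [Finset.sum_congr rfl (fun w _ => by rw [h0 w]), bern_hEx i]
  · have hik' : k ≠ i := fun hh => hik hh.symm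
    rw [if_neg hik]
    have h : ∀ w : Fin n → Bool, ((1:ℝ)/2)^n * (ind (w i) * ind (w k))
        = ∏ j, ((1/2) * ((if j = i then ind (w j) else 1) * (if j = k then ind (w j) else 1))) := by
      intro w
      rw [Finset.prod_mul_distrib, Finset.prod_const, Finset.card_univ, Fintype.card_fin,
        Finset.prod_mul_distrib,
        Finset.prod_ite_eq' Finset.univ i (fun j => ind (w j)),
        Finset.prod_ite_eq' Finset.univ k (fun j => ind (w j))]
      simp
    rw [Finset.sum_congr rfl (fun w _ => h w),
      sum_pi_bool' (fun j b => (1/2) * ((if j = i then ind b else 1) * (if j = k then ind b else 1)))]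
    have h2 : ∀ j : Fin n, ((1:ℝ)/2) * ((if j = i then ind false else 1) * (if j = k then ind false else 1))
        + (1/2) * ((if j = i then ind true else 1) * (if j = k then ind true else 1))
        = (if j = i then (1/2:ℝ) else 1) * (if j = k then 1/2 else 1) := by
      intro j
      by_cases h1 : j = i
      · by_cases hh : j = k
        · exact absurd (h1.symm.trans hh) hik
        · simp [h1, hh, hik, ind]
      · by_cases hh : j = k
        · simp [h1, hh, hik', ind]
        · norm_num [h1, hh, ind]
    rw [Finset.prod_congr rfl (fun j _ => h2 j), Finset.prod_mul_distrib,
      Finset.prod_ite_eq' Finset.univ i (fun _ => (1/2:ℝ)),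
      Finset.prod_ite_eq' Finset.univ k (fun _ => (1/2:ℝ))]
    norm_num

lemma bern_hB {n : ℕ} (α β γ ζ : Fin n → Fin n → ℝ) (i k : Fin n) :
    ∑ w : Fin n → Bool, ((1:ℝ)/2)^n *
        (2*(2*ind (w i) - 1) * (zDyad α β γ ζ (fun m => ind (w m)) k i
          + zDyad α β γ ζ (fun m => ind (w m)) i k))
    = if i = k then β k i + γ k i + ζ k i + β i k + γ i k + ζ i k
      else γ k i + β i k + ζ k i / 2 + ζ i k / 2 := by
  have hpt : ∀ w : Fin n → Bool, ((1:ℝ)/2)^n *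
        (2*(2*ind (w i) - 1) * (zDyad α β γ ζ (fun m => ind (w m)) k i
          + zDyad α β γ ζ (fun m => ind (w m)) i k))
      = (-2*(α k i + α i k)) * ((1:ℝ)/2)^n
        + (4*(α k i + α i k) + 2*γ k i + 2*β i k) * (((1:ℝ)/2)^n * ind (w i))
        + (-2*β k i - 2*γ i k) * (((1:ℝ)/2)^n * ind (w k))
        + (4*β k i + 2*ζ k i + 4*γ i k + 2*ζ i k) * (((1:ℝ)/2)^n * (ind (w i) * ind (w k))) := by
    intro w
    simp only [zDyad]
    cases hwi : w i <;> cases hwk : w k <;> simp [hwi, hwk, ind] <;> ring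
  calc ∑ w : Fin n → Bool, ((1:ℝ)/2)^n *
        (2*(2*ind (w i) - 1) * (zDyad α β γ ζ (fun m => ind (w m)) k i
          + zDyad α β γ ζ (fun m => ind (w m)) i k))
      = ∑ w : Fin n → Bool, ((-2*(α k i + α i k)) * ((1:ℝ)/2)^n
        + (4*(α k i + α i k) + 2*γ k i + 2*β i k) * (((1:ℝ)/2)^n * ind (w i))
        + (-2*β k i - 2*γ i k) * (((1:ℝ)/2)^n * ind (w k))
        + (4*β k i + 2*ζ k i + 4*γ i k + 2*ζ i k) * (((1:ℝ)/2)^n * (ind (w i) * ind (w k)))) :=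
      Finset.sum_congr rfl (fun w _ => hpt w)
    _ = (-2*(α k i + α i k)) * (∑ _w : Fin n → Bool, ((1:ℝ)/2)^n)
        + (4*(α k i + α i k) + 2*γ k i + 2*β i k) * (∑ w : Fin n → Bool, ((1:ℝ)/2)^n * ind (w i))
        + (-2*β k i - 2*γ i k) * (∑ w : Fin n → Bool, ((1:ℝ)/2)^n * ind (w k))
        + (4*β k i + 2*ζ k i + 4*γ i k + 2*ζ i k) *
            (∑ w : Fin n → Bool, ((1:ℝ)/2)^n * (ind (w i) * ind (w k))) := by
      simp only [Finset.sum_add_distrib, Finset.mul_sum]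
    _ = _ := by
      rw [bern_hE1, bern_hEx i, bern_hEx k, bern_hExx i k]
      by_cases h : i = k <;> simp only [h, if_pos, if_true, if_neg, if_false] <;> ring_nf

lemma bern_hA {n : ℕ} (α β γ ζ : Fin n → Fin n → ℝ) :
    expectBern n (1/2) (fun w => tauHat1Full α β γ ζ (1/2) w + tauHat2Full α β γ ζ (1/2) w)
      = (1 / (n:ℝ)) * ∑ i, ∑ k, ∑ w : Fin n → Bool, ((1:ℝ)/2)^n *
          (2*(2*ind (w i) - 1) * (zDyad α β γ ζ (fun m => ind (w m)) k i
            + zDyad α β γ ζ (fun m => ind (w m)) i k)) := by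
  have point0 : ∀ w : Fin n → Bool,
      tauHat1Full α β γ ζ (1/2) w + tauHat2Full α β γ ζ (1/2) w
      = (1 / (n:ℝ)) * ∑ i, ∑ k,
          2*(2*ind (w i) - 1) * (zDyad α β γ ζ (fun m => ind (w m)) k i
            + zDyad α β γ ζ (fun m => ind (w m)) i k) := by
    intro w
    simp only [tauHat1Full, tauHat2Full, YaggFull, DaggFull]
    rw [← mul_add, ← Finset.sum_add_distrib]
    congr 1
    refine Finset.sum_congr rfl fun i _ => ?_
    simp only [mul_add, Finset.sum_add_distrib, ← Finset.mul_sum]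
    ring
  have hw : ∀ w : Fin n → Bool, (∏ i, if w i then (1:ℝ)/2 else 1 - 1/2) = ((1:ℝ)/2)^n := by
    intro w
    rw [show (∏ i, if w i then (1:ℝ)/2 else 1 - 1/2) = ∏ _i : Fin n, (1:ℝ)/2 from
      Finset.prod_congr rfl fun i _ => by split <;> norm_num]
    simp
  unfold expectBern
  calc ∑ w : Fin n → Bool, (∏ i, if w i then (1:ℝ)/2 else 1 - 1/2) *
        (tauHat1Full α β γ ζ (1/2) w + tauHat2Full α β γ ζ (1/2) w)
      = ∑ w : Fin n → Bool, (1 / (n:ℝ)) * ∑ i, ∑ k, ((1:ℝ)/2)^n *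
          (2*(2*ind (w i) - 1) * (zDyad α β γ ζ (fun m => ind (w m)) k i
            + zDyad α β γ ζ (fun m => ind (w m)) i k)) := by
        refine Finset.sum_congr rfl fun w _ => ?_
        rw [hw w, point0 w]
        simp only [Finset.mul_sum]
        exact Finset.sum_congr rfl fun i _ => Finset.sum_congr rfl fun k _ => by ring
    _ = _ := by
        rw [← Finset.mul_sum]
        congr 1
        rw [Finset.sum_comm]
        exact Finset.sum_congr rfl fun i _ => Finset.sum_comm

/-- Self-loop bias claim: When nonzero diagonal outcomes
`z_{i,i}(W) = α_{i,i} + (β_{i,i} + γ_{i,i} + ζ_{i,i}) W_i` are allowed, under the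
full-population Bernoulli design with treatment probability `1/2`, the combined
estimator satisfies `E[τ̂(1/2)] = τ + (1/n) Σ_i (β_{i,i} + γ_{i,i} + ζ_{i,i})`, where
`τ = (1/n) Σ_j (Y_j(1) − Y_j(0))` includes the diagonal terms; hence the absolute
bias equals `(1/n) |Σ_i (β_{i,i} + γ_{i,i} + ζ_{i,i})|`. -/
theorem tauHat_selfLoop_bias
    (n : ℕ) (hn : 1 ≤ n) (α β γ ζ : Fin n → Fin n → ℝ) :
    expectBern n (1 / 2)
        (fun w => tauHat1Full α β γ ζ (1 / 2) w + tauHat2Full α β γ ζ (1 / 2) w) =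
      (1 / (n : ℝ)) *
          ∑ j, (YaggFull α β γ ζ (fun _ => (1 : ℝ)) j -
            YaggFull α β γ ζ (fun _ => (0 : ℝ)) j) +
        (1 / (n : ℝ)) * ∑ i, (β i i + γ i i + ζ i i) ∧
    |expectBern n (1 / 2)
        (fun w => tauHat1Full α β γ ζ (1 / 2) w + tauHat2Full α β γ ζ (1 / 2) w) -
      (1 / (n : ℝ)) *
          ∑ j, (YaggFull α β γ ζ (fun _ => (1 : ℝ)) j -
            YaggFull α β γ ζ (fun _ => (0 : ℝ)) j)| =
      (1 / (n : ℝ)) * |∑ i, (β i i + γ i i + ζ i i)| := by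
  have hsplit : ∀ i : Fin n, (∑ k, if i = k then β k i + γ k i + ζ k i + β i k + γ i k + ζ i k
      else γ k i + β i k + ζ k i / 2 + ζ i k / 2)
      = (∑ k, (γ k i + β i k + ζ k i / 2 + ζ i k / 2)) + (β i i + γ i i + ζ i i) := by
    intro i
    have hk : ∀ k : Fin n, (if i = k then β k i + γ k i + ζ k i + β i k + γ i k + ζ i k
        else γ k i + β i k + ζ k i / 2 + ζ i k / 2)
        = (γ k i + β i k + ζ k i / 2 + ζ i k / 2)
          + (if i = k then β k i + γ i k + ζ k i / 2 + ζ i k / 2 else 0) := by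
      intro k
      split
      · rename_i h; subst h; ring
      · ring
    rw [Finset.sum_congr rfl fun k _ => hk k, Finset.sum_add_distrib, Finset.sum_ite_eq]
    simp only [Finset.mem_univ, if_true]
    ring
  have hY : ∀ j : Fin n, YaggFull α β γ ζ (fun _ => (1:ℝ)) j
      - YaggFull α β γ ζ (fun _ => (0:ℝ)) j = ∑ m, (β m j + γ m j + ζ m j) := by
    intro j
    simp only [YaggFull, zDyad]
    rw [← Finset.sum_sub_distrib]
    exact Finset.sum_congr rfl fun m _ => by ring
  have hbase : (∑ i, ∑ k, (γ k i + β i k + ζ k i / 2 + ζ i k / 2))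
      = ∑ j, ∑ m, (β m j + γ m j + ζ m j) := by
    have s1 : (∑ i, ∑ k, γ k i) = ∑ i, ∑ k, γ i k := Finset.sum_comm
    have s2 : (∑ i, ∑ k, ζ k i) = ∑ i, ∑ k, ζ i k := Finset.sum_comm
    have s3 : (∑ j, ∑ m, (β m j + γ m j + ζ m j)) = ∑ m, ∑ j, (β m j + γ m j + ζ m j) :=
      Finset.sum_comm
    rw [s3]
    simp only [Finset.sum_add_distrib, ← Finset.sum_div]
    rw [s1, s2]
    ring
  have key : expectBern n (1 / 2)
      (fun w => tauHat1Full α β γ ζ (1 / 2) w + tauHat2Full α β γ ζ (1 / 2) w) =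
    (1 / (n : ℝ)) *
        ∑ j, (YaggFull α β γ ζ (fun _ => (1 : ℝ)) j -
          YaggFull α β γ ζ (fun _ => (0 : ℝ)) j) +
      (1 / (n : ℝ)) * ∑ i, (β i i + γ i i + ζ i i) := by
    rw [bern_hA α β γ ζ,
      Finset.sum_congr rfl fun i _ => Finset.sum_congr rfl fun k _ => bern_hB α β γ ζ i k,
      Finset.sum_congr rfl fun i _ => hsplit i, Finset.sum_add_distrib, hbase,
      Finset.sum_congr rfl fun j (_ : j ∈ Finset.univ) => hY j, mul_add]
  refine ⟨key, ?_⟩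
  rw [key, add_sub_cancel_left, abs_mul, abs_of_nonneg (by positivity : (0:ℝ) ≤ 1 / (n:ℝ))]
end
end

section
/- (Proposition 4) Under the sub-population Bernoulli design with in-experiment probability p and treatment probability π, the expectation of the Horvitz–Thompson estimator built from Y satisfies E[τ̂¹(p,π)] = (1/n) Σ_{i ≠ j} (γ_{i,j} + pπ ζ_{i,j}). -/
/-!
The estimator is `1/n` times a sum over ordered pairs `i ≠ j` of terms that depend only on
`(V_i, V_j, U_i, U_j)`, and under the product design the expectation of such a term is a finite
sum over these four coordinates. Since `W_j ∈ {0,1}` and `V_j W_j = W_j`, the pair term is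
`W_j (α + γ + (β + ζ) W_i) / (pπ) - (V_j - W_j) (α + β W_i) / (p (1 - π))`; with
`E W_j = pπ`, `E W_i W_j = (pπ)²`, `E V_j = p` and `E V_j W_i = p²π` both parts have mean
`α + β pπ` plus, in the first one, `γ + pπ ζ`.
-/

open Finset

noncomputable section

/-- Expectation over the sub-population design: `v ∈ {0,1}^n` are i.i.d. Bernoulli(`p`)
in-experiment indicators, `u ∈ {0,1}^n` are i.i.d. Bernoulli(`q`) treatment coins, all
`2n` variables mutually independent. -/
def expectVU (n : ℕ) (p q : ℝ) (f : (Fin n → Bool) → (Fin n → Bool) → ℝ) : ℝ :=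
  ∑ v : Fin n → Bool, ∑ u : Fin n → Bool,
    (∏ i, if v i then p else 1 - p) * (∏ i, if u i then q else 1 - q) * f v u

/-- Realized treatment in the sub-population design: `W_i = V_i U_i`
(units outside the experiment receive control). -/
def treatVU {n : ℕ} (v u : Fin n → Bool) : Fin n → ℝ :=
  fun i => ind (v i && u i)

/-- Horvitz–Thompson estimator built from `Y` in the sub-population design:
`τ̂¹(p,q)(v,u) = (1/n) Σ_i [V_i W_i Y_i(W)/(pq) − V_i (1 − W_i) Y_i(W)/(p(1 − q))]`. -/
def tauHat1Sub {n : ℕ} (α β γ ζ : Fin n → Fin n → ℝ) (p q : ℝ)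
    (v u : Fin n → Bool) : ℝ :=
  (1 / (n : ℝ)) * ∑ i,
    (ind (v i) * treatVU v u i * Yagg α β γ ζ (treatVU v u) i / (p * q) -
      ind (v i) * (1 - treatVU v u i) * Yagg α β γ ζ (treatVU v u) i / (p * (1 - q)))

/-- Horvitz–Thompson estimator built from `D` in the sub-population design. -/
def tauHat2Sub {n : ℕ} (α β γ ζ : Fin n → Fin n → ℝ) (p q : ℝ)
    (v u : Fin n → Bool) : ℝ :=
  (1 / (n : ℝ)) * ∑ i,
    (ind (v i) * treatVU v u i * Dagg α β γ ζ (treatVU v u) i / (p * q) -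
      ind (v i) * (1 - treatVU v u i) * Dagg α β γ ζ (treatVU v u) i / (p * (1 - q)))

namespace Fintype

variable {ι α : Type*} [Fintype ι] [DecidableEq ι] [Fintype α] {w : ι → α → ℝ}

theorem sum_prod_mul_apply_mul_apply (hw : ∀ k, ∑ a, w k a = 1) {i j : ι} (hij : i ≠ j)
    (g h : α → ℝ) :
    ∑ x : ι → α, (∏ k, w k (x k)) * (g (x i) * h (x j)) =
      (∑ a, w i a * g a) * ∑ b, w j b * h b := by
  let w' : ι → α → ℝ := fun k b => w k b * (if k = i then g b else 1) * (if k = j then h b else 1)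
  have hprod (x : ι → α) : (∏ k, w k (x k)) * (g (x i) * h (x j)) = ∏ k, w' k (x k) := by
    simp only [w', Finset.prod_mul_distrib, Fintype.prod_ite_eq', mul_assoc]
  simp only [hprod, ← Fintype.prod_sum]
  rw [Finset.prod_eq_mul i j hij (fun k _ hk => by simpa [w', hk.1, hk.2] using hw k)
    (by simp) (by simp)]
  simp [w', hij, hij.symm]

theorem sum_prod_mul_apply_apply [DecidableEq α] (hw : ∀ k, ∑ a, w k a = 1) {i j : ι}
    (hij : i ≠ j) (f : α → α → ℝ) :
    ∑ x : ι → α, (∏ k, w k (x k)) * f (x i) (x j) = ∑ a, ∑ b, w i a * w j b * f a b := by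
  have hf (x : ι → α) : f (x i) (x j) =
      ∑ a, ∑ b, ((if x i = a then 1 else 0) * (if x j = b then 1 else 0)) * f a b := by
    simp
  calc ∑ x : ι → α, (∏ k, w k (x k)) * f (x i) (x j)
      = ∑ a, ∑ b, (∑ x : ι → α, (∏ k, w k (x k)) *
          ((if x i = a then 1 else 0) * (if x j = b then 1 else 0))) * f a b := by
        simp only [hf, Finset.mul_sum, Finset.sum_mul, mul_assoc]
        rw [Finset.sum_comm]
        exact Finset.sum_congr rfl fun a _ => Finset.sum_comm
    _ = ∑ a, ∑ b, w i a * w j b * f a b := by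
        refine Finset.sum_congr rfl fun a _ => Finset.sum_congr rfl fun b _ => ?_
        rw [sum_prod_mul_apply_mul_apply hw hij (fun a' => if a' = a then 1 else 0)
          (fun b' => if b' = b then 1 else 0)]
        simp

end Fintype

def bernoulliMass (p : ℝ) (b : Bool) : ℝ := if b then p else 1 - p

theorem sum_bernoulliMass (p : ℝ) : ∑ b, bernoulliMass p b = 1 := by
  simp [bernoulliMass]

section Design

variable {n : ℕ} {p q : ℝ}

theorem expectVU_sum {κ : Type*} (s : Finset κ)
    (f : κ → (Fin n → Bool) → (Fin n → Bool) → ℝ) :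
    expectVU n p q (fun v u => ∑ k ∈ s, f k v u) = ∑ k ∈ s, expectVU n p q (f k) := by
  simp only [expectVU, Finset.mul_sum]
  exact (Finset.sum_congr rfl fun v _ => Finset.sum_comm).trans Finset.sum_comm

theorem expectVU_const_mul (c : ℝ) (f : (Fin n → Bool) → (Fin n → Bool) → ℝ) :
    expectVU n p q (fun v u => c * f v u) = c * expectVU n p q f := by
  simp only [expectVU, Finset.mul_sum, mul_left_comm]

theorem expectVU_apply_apply {i j : Fin n} (hij : i ≠ j)
    (F : Bool → Bool → Bool → Bool → ℝ) :
    expectVU n p q (fun v u => F (v i) (v j) (u i) (u j)) =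
      ∑ a, ∑ c, bernoulliMass p a * bernoulliMass p c *
        ∑ b, ∑ d, bernoulliMass q b * bernoulliMass q d * F a c b d := by
  have hu (v : Fin n → Bool) :
      ∑ u : Fin n → Bool, (∏ k, bernoulliMass q (u k)) * F (v i) (v j) (u i) (u j) =
        ∑ b, ∑ d, bernoulliMass q b * bernoulliMass q d * F (v i) (v j) b d :=
    Fintype.sum_prod_mul_apply_apply (fun _ => sum_bernoulliMass q) hij _
  calc expectVU n p q (fun v u => F (v i) (v j) (u i) (u j))
      = ∑ v : Fin n → Bool, (∏ k, bernoulliMass p (v k)) *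
          ∑ u : Fin n → Bool, (∏ k, bernoulliMass q (u k)) * F (v i) (v j) (u i) (u j) := by
        simp only [expectVU, Finset.mul_sum, mul_assoc]
        rfl
    _ = _ := by
        simp only [hu]
        exact Fintype.sum_prod_mul_apply_apply (fun _ => sum_bernoulliMass p) hij
          fun a c => ∑ b, ∑ d, bernoulliMass q b * bernoulliMass q d * F a c b d

def htTerm (α β γ ζ : Fin n → Fin n → ℝ) (p q : ℝ) (v u : Fin n → Bool) (i j : Fin n) : ℝ :=
  ind (v j) * treatVU v u j * zDyad α β γ ζ (treatVU v u) i j / (p * q) -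
    ind (v j) * (1 - treatVU v u j) * zDyad α β γ ζ (treatVU v u) i j / (p * (1 - q))

theorem tauHat1Sub_eq_sum_htTerm (α β γ ζ : Fin n → Fin n → ℝ) :
    tauHat1Sub α β γ ζ p q = fun v u =>
      (1 / (n : ℝ)) * ∑ j, ∑ i ∈ ({j}ᶜ : Finset (Fin n)), htTerm α β γ ζ p q v u i j := by
  funext v u
  unfold tauHat1Sub Yagg htTerm
  simp only [Finset.mul_sum, Finset.sum_div, Finset.sum_sub_distrib]

theorem expectVU_htTerm (α β γ ζ : Fin n → Fin n → ℝ) (hp : p ≠ 0) (hq₀ : q ≠ 0) (hq₁ : q ≠ 1)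
    {i j : Fin n} (hij : i ≠ j) :
    expectVU n p q (fun v u => htTerm α β γ ζ p q v u i j) = γ i j + p * q * ζ i j := by
  refine (expectVU_apply_apply hij fun a c b d =>
    let z := α i j + β i j * ind (a && b) + γ i j * ind (c && d) +
      ζ i j * ind (a && b) * ind (c && d)
    ind c * ind (c && d) * z / (p * q) - ind c * (1 - ind (c && d)) * z / (p * (1 - q))).trans ?_
  have : 1 - q ≠ 0 := sub_ne_zero.mpr hq₁.symm
  simp only [Fintype.sum_bool, bernoulliMass, ind, Bool.and_true, Bool.and_false,
    Bool.false_eq_true, ↓reduceIte]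
  field_simp
  ring

end Design

theorem expect_tauHat1Sub_general
    (n : ℕ) (α β γ ζ : Fin n → Fin n → ℝ)
    (p q : ℝ) (hp0 : 0 < p) (hq0 : 0 < q) (hq1 : q < 1) :
    expectVU n p q (tauHat1Sub α β γ ζ p q) =
      (1 / (n : ℝ)) * ∑ j, ∑ i ∈ ({j}ᶜ : Finset (Fin n)), (γ i j + p * q * ζ i j) := by
  rw [tauHat1Sub_eq_sum_htTerm, expectVU_const_mul, expectVU_sum]
  refine congrArg _ (Finset.sum_congr rfl fun j _ => ?_)
  rw [expectVU_sum]
  exact Finset.sum_congr rfl fun i hi =>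
    expectVU_htTerm α β γ ζ hp0.ne' hq0.ne' hq1.ne (by simpa using hi)

/-- Proposition 4: Under the sub-population Bernoulli design with
in-experiment probability `p` and treatment probability `q`,
`E[τ̂¹(p,q)] = (1/n) Σ_{i ≠ j} (γ_{i,j} + pq ζ_{i,j})`. -/
theorem expect_tauHat1Sub
    (n : ℕ) (hn : 1 ≤ n) (α β γ ζ : Fin n → Fin n → ℝ)
    (p q : ℝ) (hp0 : 0 < p) (hp1 : p ≤ 1) (hq0 : 0 < q) (hq1 : q < 1) :
    expectVU n p q (tauHat1Sub α β γ ζ p q) =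
      (1 / (n : ℝ)) * ∑ j, ∑ i ∈ ({j}ᶜ : Finset (Fin n)), (γ i j + p * q * ζ i j) :=
  expect_tauHat1Sub_general n α β γ ζ p q hp0 hq0 hq1
end
end

section
/- (Theorem 2, expectation formula) Under the sub-population Bernoulli design with in-experiment probability p and treatment probability π, the estimator τ̂(p,π) = τ̂¹(p,π) + τ̂²(p,π) satisfies E[τ̂(p,π)] = (1/n) Σ_{i ≠ j} (β_{i,j} + γ_{i,j} + 2pπ ζ_{i,j}). -/
open Finset

noncomputable section

namespace TauAuxProof

/-- Single-site expectation weight functional. -/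
def E1 (p q : ℝ) (f : Bool → Bool → ℝ) : ℝ :=
  ∑ b : Bool, ∑ c : Bool, (if b then p else 1 - p) * (if c then q else 1 - q) * f b c

lemma E1_eval (p q : ℝ) (f : Bool → Bool → ℝ) :
    E1 p q f = p * q * f true true + p * (1 - q) * f true false +
      (1 - p) * q * f false true + (1 - p) * (1 - q) * f false false := by
  simp [E1, Fintype.univ_bool]
  ring

lemma E1_one (p q : ℝ) : E1 p q (fun _ _ => 1) = 1 := by
  rw [E1_eval]; ring

/-- Factorization of the design expectation over sites. -/
lemma expectVU_prod (n : ℕ) (p q : ℝ) (F : Fin n → Bool → Bool → ℝ) :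
    expectVU n p q (fun v u => ∏ i, F i (v i) (u i)) = ∏ i, E1 p q (F i) := by
  unfold expectVU E1
  have h : ∀ (v u : Fin n → Bool),
      (∏ i, if v i then p else 1 - p) * (∏ i, if u i then q else 1 - q) *
          ∏ i, F i (v i) (u i)
        = ∏ i, ((if v i then p else 1 - p) * (if u i then q else 1 - q) * F i (v i) (u i)) := by
    intro v u
    rw [Finset.prod_mul_distrib, Finset.prod_mul_distrib]
  simp only [h]
  have h2 : ∀ v : Fin n → Bool,
      (∑ u : Fin n → Bool,
        ∏ i, ((if v i then p else 1 - p) * (if u i then q else 1 - q) * F i (v i) (u i)))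
      = ∏ i, ∑ c : Bool, ((if v i then p else 1 - p) * (if c then q else 1 - q) * F i (v i) c) :=
    fun v => (Fintype.prod_sum
      fun i c => (if v i then p else 1 - p) * (if c then q else 1 - q) * F i (v i) c).symm
  simp only [h2]
  exact (Fintype.prod_sum
    fun i b => ∑ c : Bool, ((if b then p else 1 - p) * (if c then q else 1 - q) * F i b c)).symm

lemma expectVU_one_site (n : ℕ) (p q : ℝ) (i : Fin n) (f : Bool → Bool → ℝ) :
    expectVU n p q (fun v u => f (v i) (u i)) = E1 p q f := by
  classical
  set G : Fin n → Bool → Bool → ℝ := fun j => if j = i then f else fun _ _ => 1 with hG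
  have h1 : (fun (v u : Fin n → Bool) => f (v i) (u i))
      = fun v u => ∏ j, G j (v j) (u j) := by
    funext v u
    rw [Finset.prod_eq_single_of_mem i (Finset.mem_univ i)
      (fun j _ hj => by simp [hG, hj])]
    simp [hG]
  rw [h1, expectVU_prod, Finset.prod_eq_single_of_mem i (Finset.mem_univ i)
    (fun j _ hj => by simp [hG, hj, E1_one])]
  simp [hG]

lemma expectVU_two_site (n : ℕ) (p q : ℝ) (i k : Fin n) (hik : i ≠ k)
    (f g : Bool → Bool → ℝ) :
    expectVU n p q (fun v u => f (v i) (u i) * g (v k) (u k)) = E1 p q f * E1 p q g := by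
  classical
  set G : Fin n → Bool → Bool → ℝ :=
    fun j => if j = i then f else if j = k then g else fun _ _ => 1 with hG
  have hside : ∀ j, j ∉ ({i, k} : Finset (Fin n)) → ∀ b c, G j b c = 1 := by
    intro j hj b c
    simp only [Finset.mem_insert, Finset.mem_singleton, not_or] at hj
    simp [hG, hj.1, hj.2]
  have h1 : (fun (v u : Fin n → Bool) => f (v i) (u i) * g (v k) (u k))
      = fun v u => ∏ j, G j (v j) (u j) := by
    funext v u
    rw [← Finset.prod_subset (Finset.subset_univ ({i, k} : Finset (Fin n)))
      (fun j _ hj => hside j hj (v j) (u j)), Finset.prod_pair hik]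
    simp [hG, hik.symm]
  rw [h1, expectVU_prod,
    ← Finset.prod_subset (Finset.subset_univ ({i, k} : Finset (Fin n)))
      (fun j _ hj => by
        have : ∀ b c, G j b c = 1 := hside j hj
        have : G j = fun _ _ => 1 := by funext b c; exact this b c
        rw [this, E1_one]),
    Finset.prod_pair hik]
  simp [hG, hik.symm]

lemma expectVU_add (n : ℕ) (p q : ℝ) (f g : (Fin n → Bool) → (Fin n → Bool) → ℝ) :
    expectVU n p q (fun v u => f v u + g v u)
      = expectVU n p q f + expectVU n p q g := by
  unfold expectVU
  rw [← Finset.sum_add_distrib]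
  refine Finset.sum_congr rfl fun v _ => ?_
  rw [← Finset.sum_add_distrib]
  refine Finset.sum_congr rfl fun u _ => ?_
  ring

lemma expectVU_const_mul (n : ℕ) (p q c : ℝ) (f : (Fin n → Bool) → (Fin n → Bool) → ℝ) :
    expectVU n p q (fun v u => c * f v u) = c * expectVU n p q f := by
  unfold expectVU
  rw [Finset.mul_sum]
  refine Finset.sum_congr rfl fun v _ => ?_
  rw [Finset.mul_sum]
  refine Finset.sum_congr rfl fun u _ => ?_
  ring

lemma expectVU_lin4 (n : ℕ) (p q c1 c2 c3 c4 : ℝ)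
    (f1 f2 f3 f4 : (Fin n → Bool) → (Fin n → Bool) → ℝ) :
    expectVU n p q (fun v u => c1 * f1 v u + c2 * f2 v u + c3 * f3 v u + c4 * f4 v u)
      = c1 * expectVU n p q f1 + c2 * expectVU n p q f2 +
        c3 * expectVU n p q f3 + c4 * expectVU n p q f4 := by
  unfold expectVU
  rw [Finset.mul_sum, Finset.mul_sum, Finset.mul_sum, Finset.mul_sum,
    ← Finset.sum_add_distrib, ← Finset.sum_add_distrib, ← Finset.sum_add_distrib]
  refine Finset.sum_congr rfl fun v _ => ?_
  rw [Finset.mul_sum, Finset.mul_sum, Finset.mul_sum, Finset.mul_sum,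
    ← Finset.sum_add_distrib, ← Finset.sum_add_distrib, ← Finset.sum_add_distrib]
  refine Finset.sum_congr rfl fun u _ => ?_
  ring

lemma expectVU_sum (n : ℕ) (p q : ℝ) {κ : Type*} (s : Finset κ)
    (f : κ → (Fin n → Bool) → (Fin n → Bool) → ℝ) :
    expectVU n p q (fun v u => ∑ x ∈ s, f x v u)
      = ∑ x ∈ s, expectVU n p q (f x) := by
  unfold expectVU
  simp only [Finset.mul_sum]
  rw [show (∑ v : Fin n → Bool, ∑ u : Fin n → Bool, ∑ x ∈ s,
        (∏ i, if v i then p else 1 - p) * (∏ i, if u i then q else 1 - q) * f x v u)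
      = ∑ v : Fin n → Bool, ∑ x ∈ s, ∑ u : Fin n → Bool,
        (∏ i, if v i then p else 1 - p) * (∏ i, if u i then q else 1 - q) * f x v u
    from Finset.sum_congr rfl fun v _ => Finset.sum_comm]
  exact Finset.sum_comm

/-- Treatment indicator as a single-site function. -/
def fW : Bool → Bool → ℝ := fun b c => ind (b && c)

/-- Horvitz–Thompson weight as a single-site function. -/
def fA (p q : ℝ) : Bool → Bool → ℝ := fun b c =>
  ind b * ind (b && c) / (p * q) - ind b * (1 - ind (b && c)) / (p * (1 - q))

def fAW (p q : ℝ) : Bool → Bool → ℝ := fun b c => fA p q b c * fW b c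

lemma E1_fW (p q : ℝ) : E1 p q fW = p * q := by
  rw [E1_eval]; simp [fW, ind]

lemma E1_fA (p q : ℝ) (hp : p ≠ 0) (hq : q ≠ 0) (hq' : (1 : ℝ) - q ≠ 0) :
    E1 p q (fA p q) = 0 := by
  rw [E1_eval]; simp only [fA, ind]; simp; field_simp; ring

lemma E1_fAW (p q : ℝ) (hp : p ≠ 0) (hq : q ≠ 0) (hq' : (1 : ℝ) - q ≠ 0) :
    E1 p q (fAW p q) = 1 := by
  rw [E1_eval]; simp only [fAW, fA, fW, ind]; simp; field_simp

lemma exp_term1 {n : ℕ} (α β γ ζ : Fin n → Fin n → ℝ) (p q : ℝ)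
    (hp : p ≠ 0) (hq : q ≠ 0) (hq' : (1 : ℝ) - q ≠ 0) (i k : Fin n) (hik : i ≠ k) :
    expectVU n p q (fun v u => fA p q (v i) (u i) * zDyad α β γ ζ (treatVU v u) k i)
      = γ k i + p * q * ζ k i := by
  have hrw : (fun (v u : Fin n → Bool) =>
        fA p q (v i) (u i) * zDyad α β γ ζ (treatVU v u) k i)
      = fun v u => α k i * fA p q (v i) (u i)
          + β k i * (fA p q (v i) (u i) * fW (v k) (u k))
          + γ k i * fAW p q (v i) (u i)
          + ζ k i * (fAW p q (v i) (u i) * fW (v k) (u k)) := by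
    funext v u
    simp only [zDyad, treatVU, fAW, fW]
    ring
  calc expectVU n p q (fun v u => fA p q (v i) (u i) * zDyad α β γ ζ (treatVU v u) k i)
      = α k i * expectVU n p q (fun v u => fA p q (v i) (u i))
        + β k i * expectVU n p q (fun v u => fA p q (v i) (u i) * fW (v k) (u k))
        + γ k i * expectVU n p q (fun v u => fAW p q (v i) (u i))
        + ζ k i * expectVU n p q (fun v u => fAW p q (v i) (u i) * fW (v k) (u k)) := by
        rw [hrw]
        exact expectVU_lin4 n p q (α k i) (β k i) (γ k i) (ζ k i) _ _ _ _
    _ = γ k i + p * q * ζ k i := by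
        rw [expectVU_one_site n p q i (fA p q),
          expectVU_two_site n p q i k hik (fA p q) fW,
          expectVU_one_site n p q i (fAW p q),
          expectVU_two_site n p q i k hik (fAW p q) fW,
          E1_fA p q hp hq hq', E1_fW, E1_fAW p q hp hq hq']
        ring

lemma exp_term2 {n : ℕ} (α β γ ζ : Fin n → Fin n → ℝ) (p q : ℝ)
    (hp : p ≠ 0) (hq : q ≠ 0) (hq' : (1 : ℝ) - q ≠ 0) (i k : Fin n) (hik : i ≠ k) :
    expectVU n p q (fun v u => fA p q (v i) (u i) * zDyad α β γ ζ (treatVU v u) i k)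
      = β i k + p * q * ζ i k := by
  have hrw : (fun (v u : Fin n → Bool) =>
        fA p q (v i) (u i) * zDyad α β γ ζ (treatVU v u) i k)
      = fun v u => α i k * fA p q (v i) (u i)
          + β i k * fAW p q (v i) (u i)
          + γ i k * (fA p q (v i) (u i) * fW (v k) (u k))
          + ζ i k * (fAW p q (v i) (u i) * fW (v k) (u k)) := by
    funext v u
    simp only [zDyad, treatVU, fAW, fW]
    ring
  calc expectVU n p q (fun v u => fA p q (v i) (u i) * zDyad α β γ ζ (treatVU v u) i k)
      = α i k * expectVU n p q (fun v u => fA p q (v i) (u i))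
        + β i k * expectVU n p q (fun v u => fAW p q (v i) (u i))
        + γ i k * expectVU n p q (fun v u => fA p q (v i) (u i) * fW (v k) (u k))
        + ζ i k * expectVU n p q (fun v u => fAW p q (v i) (u i) * fW (v k) (u k)) := by
        rw [hrw]
        exact expectVU_lin4 n p q (α i k) (β i k) (γ i k) (ζ i k) _ _ _ _
    _ = β i k + p * q * ζ i k := by
        rw [expectVU_one_site n p q i (fA p q),
          expectVU_two_site n p q i k hik (fA p q) fW,
          expectVU_one_site n p q i (fAW p q),
          expectVU_two_site n p q i k hik (fAW p q) fW,
          E1_fA p q hp hq hq', E1_fW, E1_fAW p q hp hq hq']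
        ring

end TauAuxProof


/-- Theorem 2, expectation formula: Under the sub-population Bernoulli
design with in-experiment probability `p` and treatment probability `q`, the combined
estimator `τ̂(p,q) = τ̂¹(p,q) + τ̂²(p,q)` satisfies
`E[τ̂(p,q)] = (1/n) Σ_{i ≠ j} (β_{i,j} + γ_{i,j} + 2pq ζ_{i,j})`. -/
theorem expect_tauHatSub_combined
    (n : ℕ) (hn : 1 ≤ n) (α β γ ζ : Fin n → Fin n → ℝ)
    (p q : ℝ) (hp0 : 0 < p) (hp1 : p ≤ 1) (hq0 : 0 < q) (hq1 : q < 1) :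
    expectVU n p q (fun v u => tauHat1Sub α β γ ζ p q v u + tauHat2Sub α β γ ζ p q v u) =
      (1 / (n : ℝ)) *
        ∑ j, ∑ i ∈ ({j}ᶜ : Finset (Fin n)), (β i j + γ i j + 2 * p * q * ζ i j) := by
  classical
  have hp : p ≠ 0 := ne_of_gt hp0
  have hq : q ≠ 0 := ne_of_gt hq0
  have hq' : (1 : ℝ) - q ≠ 0 := by linarith
  have step1 : (fun v u => tauHat1Sub α β γ ζ p q v u + tauHat2Sub α β γ ζ p q v u)
      = fun (v u : Fin n → Bool) => (1 / (n : ℝ)) *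
          ∑ i, ∑ k ∈ ({i}ᶜ : Finset (Fin n)),
            (TauAuxProof.fA p q (v i) (u i) * zDyad α β γ ζ (treatVU v u) k i
              + TauAuxProof.fA p q (v i) (u i) * zDyad α β γ ζ (treatVU v u) i k) := by
    funext v u
    simp only [tauHat1Sub, tauHat2Sub, Yagg, Dagg]
    rw [← mul_add, ← Finset.sum_add_distrib]
    congr 1
    refine Finset.sum_congr rfl fun i _ => ?_
    rw [Finset.sum_add_distrib]
    congr 1
    · rw [← Finset.mul_sum]
      simp only [TauAuxProof.fA, treatVU]
      ring
    · rw [← Finset.mul_sum]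
      simp only [TauAuxProof.fA, treatVU]
      ring
  rw [step1, TauAuxProof.expectVU_const_mul, TauAuxProof.expectVU_sum]
  have step2 : ∀ i : Fin n, expectVU n p q (fun v u => ∑ k ∈ ({i}ᶜ : Finset (Fin n)),
        (TauAuxProof.fA p q (v i) (u i) * zDyad α β γ ζ (treatVU v u) k i
          + TauAuxProof.fA p q (v i) (u i) * zDyad α β γ ζ (treatVU v u) i k))
      = ∑ k ∈ ({i}ᶜ : Finset (Fin n)),
          ((γ k i + p * q * ζ k i) + (β i k + p * q * ζ i k)) := by
    intro i
    rw [TauAuxProof.expectVU_sum n p q]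
    refine Finset.sum_congr rfl fun k hk => ?_
    have hik : i ≠ k :=
      (Finset.notMem_singleton.mp (Finset.mem_compl.mp hk)).symm
    rw [TauAuxProof.expectVU_add n p q,
      TauAuxProof.exp_term1 α β γ ζ p q hp hq hq' i k hik,
      TauAuxProof.exp_term2 α β γ ζ p q hp hq hq' i k hik]
  rw [Finset.sum_congr rfl fun i _ => step2 i]
  congr 1
  have hsplit : ∑ i, ∑ k ∈ ({i}ᶜ : Finset (Fin n)),
        ((γ k i + p * q * ζ k i) + (β i k + p * q * ζ i k))
      = (∑ i, ∑ k ∈ ({i}ᶜ : Finset (Fin n)), (γ k i + p * q * ζ k i))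
        + ∑ i, ∑ k ∈ ({i}ᶜ : Finset (Fin n)), (β i k + p * q * ζ i k) := by
    rw [← Finset.sum_add_distrib]
    exact Finset.sum_congr rfl fun i _ => Finset.sum_add_distrib
  have hswap : (∑ i, ∑ k ∈ ({i}ᶜ : Finset (Fin n)), (β i k + p * q * ζ i k))
      = ∑ j, ∑ i ∈ ({j}ᶜ : Finset (Fin n)), (β i j + p * q * ζ i j) :=
    Finset.sum_comm' (by intro x y; simp [ne_comm])
  rw [hsplit, hswap, ← Finset.sum_add_distrib]
  refine Finset.sum_congr rfl fun j _ => ?_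
  rw [← Finset.sum_add_distrib]
  refine Finset.sum_congr rfl fun i _ => ?_
  ring
end
end

section
/- (Proposition 6, edge-level form) Under the two-stage cluster design with cluster in-experiment probability p and treatment probability π, the expectation of the Horvitz–Thompson estimator built from Y satisfies E[τ̂¹_c(p,π)] = (1/n) Σ_{i ≠ j} (γ_{i,j} + κ_{i,j} ζ_{i,j}), where κ_{i,j} = π if units i and j belong to the same cluster and κ_{i,j} = pπ otherwise. -/
open Finset

noncomputable section

/-- Expectation over the two-stage cluster design: `b ∈ {0,1}^C` are i.i.d.
Bernoulli(`p`) cluster in-experiment indicators and `u ∈ {0,1}^n` are i.i.d.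
Bernoulli(`q`) treatment coins, all mutually independent. -/
def expectBU (n : ℕ) {C : Type} [Fintype C] [DecidableEq C] (p q : ℝ)
    (f : (C → Bool) → (Fin n → Bool) → ℝ) : ℝ :=
  ∑ b : C → Bool, ∑ u : Fin n → Bool,
    (∏ k, if b k then p else 1 - p) * (∏ i, if u i then q else 1 - q) * f b u

/-- Realized treatment in the two-stage cluster design: `V_i = B_{c(i)}`,
`W_i = V_i U_i` (units outside the experiment receive control). -/
def treatBU {n : ℕ} {C : Type} (c : Fin n → C) (b : C → Bool) (u : Fin n → Bool) :
    Fin n → ℝ :=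
  fun i => ind (b (c i) && u i)

/-- Horvitz–Thompson estimator built from `Y` in the two-stage cluster design:
`τ̂¹_c(p,q)(b,u) = (1/n) Σ_i [V_i W_i Y_i(W)/(pq) − V_i (1 − W_i) Y_i(W)/(p(1 − q))]`. -/
def tauHat1Clu {n : ℕ} {C : Type} (α β γ ζ : Fin n → Fin n → ℝ) (c : Fin n → C)
    (p q : ℝ) (b : C → Bool) (u : Fin n → Bool) : ℝ :=
  (1 / (n : ℝ)) * ∑ i,
    (ind (b (c i)) * treatBU c b u i * Yagg α β γ ζ (treatBU c b u) i / (p * q) -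
      ind (b (c i)) * (1 - treatBU c b u i) * Yagg α β γ ζ (treatBU c b u) i /
        (p * (1 - q)))

/-- Horvitz–Thompson estimator built from `D` in the two-stage cluster design. -/
def tauHat2Clu {n : ℕ} {C : Type} (α β γ ζ : Fin n → Fin n → ℝ) (c : Fin n → C)
    (p q : ℝ) (b : C → Bool) (u : Fin n → Bool) : ℝ :=
  (1 / (n : ℝ)) * ∑ i,
    (ind (b (c i)) * treatBU c b u i * Dagg α β γ ζ (treatBU c b u) i / (p * q) -
      ind (b (c i)) * (1 - treatBU c b u i) * Dagg α β γ ζ (treatBU c b u) i /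
        (p * (1 - q)))

/-!
By linearity, `E[τ̂¹_c]` is `1/n` times the sum over ordered pairs `j ≠ i` of the expectation of
the contribution of the edge `j → i` to unit `i`'s Horvitz–Thompson term. That contribution
depends only on the coins `B_{c(i)}, B_{c(j)}, U_i, U_j`, which are independent when
`c(i) ≠ c(j)` and reduce to the three coins `B_{c(i)}, U_i, U_j` otherwise, so its expectation is
an explicit finite sum. As `U_i` is independent of `W_j` given `V_i`, the `α` and `β` terms cancel
between the treated and the control part, leaving `γ + ζ E[W_j | V_i = 1] = γ + κ ζ`.
-/

section BernoulliProduct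

variable {ι : Type*} [Fintype ι] [DecidableEq ι]

def bernoulliMean (r : ℝ) (F : Bool → ℝ) : ℝ := r * F true + (1 - r) * F false

def bernoulliExp (r : ℝ) (f : (ι → Bool) → ℝ) : ℝ :=
  ∑ x, (∏ k, if x k then r else 1 - r) * f x

theorem bernoulliExp_add (r : ℝ) (f g : (ι → Bool) → ℝ) :
    bernoulliExp r (fun x => f x + g x) = bernoulliExp r f + bernoulliExp r g := by
  simp only [bernoulliExp, mul_add, sum_add_distrib]

theorem bernoulliExp_prod_univ (r : ℝ) (g : ι → Bool → ℝ) :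
    bernoulliExp r (fun x => ∏ k, g k (x k)) = ∏ k, bernoulliMean r (g k) := by
  simp only [bernoulliExp, ← prod_mul_distrib]
  rw [← Fintype.prod_sum (fun k (v : Bool) => (if v then r else 1 - r) * g k v)]
  simp [bernoulliMean]

theorem bernoulliExp_prod (r : ℝ) (s : Finset ι) (g : ι → Bool → ℝ) :
    bernoulliExp r (fun x => ∏ k ∈ s, g k (x k)) = ∏ k ∈ s, bernoulliMean r (g k) := by
  have hmean (k : ι) : bernoulliMean r (fun v => if k ∈ s then g k v else 1) =
      if k ∈ s then bernoulliMean r (g k) else 1 := by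
    split_ifs <;> simp [bernoulliMean]
  simpa only [hmean, prod_ite_mem, univ_inter] using
    bernoulliExp_prod_univ r (fun k v => if k ∈ s then g k v else 1)

theorem bernoulliExp_comp_eval (r : ℝ) (i : ι) (F : Bool → ℝ) :
    bernoulliExp r (fun x => F (x i)) = bernoulliMean r F := by
  simpa using bernoulliExp_prod r {i} (fun _ => F)

theorem bernoulliExp_mul_of_ne (r : ℝ) {i j : ι} (hij : i ≠ j) (G H : Bool → ℝ) :
    bernoulliExp r (fun x => G (x i) * H (x j)) = bernoulliMean r G * bernoulliMean r H := by
  simpa [prod_pair hij, hij.symm] using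
    bernoulliExp_prod r {i, j} (fun k => if k = i then G else H)

theorem bernoulliExp_comp_eval₂ (r : ℝ) {i j : ι} (hij : i ≠ j) (F : Bool → Bool → ℝ) :
    bernoulliExp r (fun x => F (x i) (x j)) =
      bernoulliMean r fun s => bernoulliMean r (F s) := by
  have hsplit (x : ι → Bool) :
      F (x i) (x j) = ind (x i) * F true (x j) + (1 - ind (x i)) * F false (x j) := by
    cases x i <;> simp [ind]
  simp only [hsplit, bernoulliExp_add, bernoulliExp_mul_of_ne r hij ind,
    bernoulliExp_mul_of_ne r hij (fun b => 1 - ind b)]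
  simp [bernoulliMean, ind]

end BernoulliProduct

section ClusterDesign

variable {n : ℕ} {C : Type} [Fintype C] [DecidableEq C]

theorem expectBU_eq_bernoulliExp (p q : ℝ) (f : (C → Bool) → (Fin n → Bool) → ℝ) :
    expectBU n p q f = bernoulliExp p (fun b => bernoulliExp q (f b)) := by
  simp only [expectBU, bernoulliExp, mul_sum, mul_assoc]

theorem expectBU_const_mul (p q a : ℝ) (f : (C → Bool) → (Fin n → Bool) → ℝ) :
    expectBU n p q (fun b u => a * f b u) = a * expectBU n p q f := by
  simp only [expectBU, mul_sum, mul_left_comm]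

theorem expectBU_sum {κ : Type*} (p q : ℝ) (s : Finset κ)
    (f : κ → (C → Bool) → (Fin n → Bool) → ℝ) :
    expectBU n p q (fun b u => ∑ x ∈ s, f x b u) = ∑ x ∈ s, expectBU n p q (f x) := by
  simp only [expectBU, mul_sum]
  rw [sum_congr rfl fun _ _ => sum_comm]
  exact sum_comm

theorem expectBU_comp_eval (p q : ℝ) (k : C) {i j : Fin n} (hij : i ≠ j)
    (F : Bool → Bool → Bool → ℝ) :
    expectBU n p q (fun b u => F (b k) (u i) (u j)) =
      bernoulliMean p fun s => bernoulliMean q fun t => bernoulliMean q (F s t) := by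
  simp only [expectBU_eq_bernoulliExp, bernoulliExp_comp_eval₂ q hij]
  exact bernoulliExp_comp_eval p k (fun s => bernoulliMean q fun t => bernoulliMean q (F s t))

theorem expectBU_comp_eval₂ (p q : ℝ) {k l : C} (hkl : k ≠ l) {i j : Fin n} (hij : i ≠ j)
    (F : Bool → Bool → Bool → Bool → ℝ) :
    expectBU n p q (fun b u => F (b k) (b l) (u i) (u j)) =
      bernoulliMean p fun s₀ => bernoulliMean p fun s₁ =>
        bernoulliMean q fun t => bernoulliMean q (F s₀ s₁ t) := by
  simp only [expectBU_eq_bernoulliExp, bernoulliExp_comp_eval₂ q hij]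
  exact bernoulliExp_comp_eval₂ p hkl
    (fun s₀ s₁ => bernoulliMean q fun t => bernoulliMean q (F s₀ s₁ t))

end ClusterDesign

/-- Contribution of the edge `j → i` to unit `i`'s Horvitz–Thompson term; the four Booleans are
the coins `B_{c(i)}, B_{c(j)}, U_i, U_j`. -/
def htEdgeTerm (α β γ ζ p q : ℝ) (vi vj ui uj : Bool) : ℝ :=
  let wi := ind (vi && ui)
  let wj := ind (vj && uj)
  let z := α + β * wj + γ * wi + ζ * wj * wi
  ind vi * wi * z / (p * q) - ind vi * (1 - wi) * z / (p * (1 - q))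

theorem tauHat1Clu_eq_sum_htEdgeTerm {n : ℕ} {C : Type} (α β γ ζ : Fin n → Fin n → ℝ)
    (c : Fin n → C) (p q : ℝ) (b : C → Bool) (u : Fin n → Bool) :
    tauHat1Clu α β γ ζ c p q b u = (1 / (n : ℝ)) * ∑ i, ∑ j ∈ ({i}ᶜ : Finset (Fin n)),
      htEdgeTerm (α j i) (β j i) (γ j i) (ζ j i) p q (b (c i)) (b (c j)) (u i) (u j) := by
  simp only [tauHat1Clu, Yagg, mul_sum, sum_div, ← sum_sub_distrib]
  rfl

theorem expectBU_htEdgeTerm {n : ℕ} {C : Type} [Fintype C] [DecidableEq C] (c : Fin n → C)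
    (α β γ ζ p q : ℝ) (hp : p ≠ 0) (hq₀ : q ≠ 0) (hq₁ : 1 - q ≠ 0) {i j : Fin n} (hij : i ≠ j) :
    expectBU n p q (fun b u => htEdgeTerm α β γ ζ p q (b (c i)) (b (c j)) (u i) (u j)) =
      γ + (if c j = c i then q else p * q) * ζ := by
  by_cases hc : c j = c i
  · rw [if_pos hc, hc, expectBU_comp_eval p q (c i) hij (fun s => htEdgeTerm α β γ ζ p q s s)]
    simp only [bernoulliMean, htEdgeTerm, ind, Bool.and_self, Bool.and_true, Bool.and_false,
      Bool.false_eq_true, ↓reduceIte]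
    field_simp
    ring
  · rw [if_neg hc, expectBU_comp_eval₂ p q (Ne.symm hc) hij]
    simp only [bernoulliMean, htEdgeTerm, ind, Bool.and_true, Bool.and_false,
      Bool.false_eq_true, ↓reduceIte]
    field_simp
    ring

theorem expect_tauHat1Clu_general
    (n : ℕ) (α β γ ζ : Fin n → Fin n → ℝ)
    (C : Type) [Fintype C] [DecidableEq C] (c : Fin n → C)
    (p q : ℝ) (hp0 : 0 < p) (hq0 : 0 < q) (hq1 : q < 1) :
    expectBU n p q (tauHat1Clu α β γ ζ c p q) =
      (1 / (n : ℝ)) * ∑ j, ∑ i ∈ ({j}ᶜ : Finset (Fin n)),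
        (γ i j + (if c i = c j then q else p * q) * ζ i j) := by
  have hq₁ : 1 - q ≠ 0 := sub_ne_zero.mpr hq1.ne'
  rw [funext₂ (tauHat1Clu_eq_sum_htEdgeTerm α β γ ζ c p q), expectBU_const_mul, expectBU_sum]
  congr 1
  refine sum_congr rfl fun i _ => ?_
  rw [expectBU_sum]
  refine sum_congr rfl fun j hj => ?_
  exact expectBU_htEdgeTerm c _ _ _ _ p q hp0.ne' hq0.ne' hq₁ (by simpa [eq_comm] using hj)

/-- Proposition 6, edge-level form: Under the two-stage cluster design
with cluster in-experiment probability `p` and treatment probability `q`,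
`E[τ̂¹_c(p,q)] = (1/n) Σ_{i ≠ j} (γ_{i,j} + κ_{i,j} ζ_{i,j})`, where `κ_{i,j} = q` if
`i` and `j` are in the same cluster and `κ_{i,j} = pq` otherwise. -/
theorem expect_tauHat1Clu
    (n : ℕ) (hn : 1 ≤ n) (α β γ ζ : Fin n → Fin n → ℝ)
    (C : Type) [Fintype C] [DecidableEq C] (c : Fin n → C)
    (p q : ℝ) (hp0 : 0 < p) (hp1 : p ≤ 1) (hq0 : 0 < q) (hq1 : q < 1) :
    expectBU n p q (tauHat1Clu α β γ ζ c p q) =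
      (1 / (n : ℝ)) * ∑ j, ∑ i ∈ ({j}ᶜ : Finset (Fin n)),
        (γ i j + (if c i = c j then q else p * q) * ζ i j) :=
  expect_tauHat1Clu_general n α β γ ζ C c p q hp0 hq0 hq1
end
end

section
/- (Bias reduction of the two-stage design) Consider the same population, parameters, in-experiment probability p, and treatment probability π under two designs: the sub-population Bernoulli design (each unit independently enters the experiment with probability p) with combined estimator τ̂(p,π), and the two-stage cluster design (clusters enter the experiment independently with probability p, with clustering map c) with combined estimator τ̂_c(p,π). Then E[τ̂_c(p,π)] − E[τ̂(p,π)] = (2π(1 − p)/n) Σ_{(i,j): i ≠ j, c(i) = c(j)} ζ_{i,j}, equivalently, E[τ̂_c(p,π) − τ] = E[τ̂(p,π) − τ] + (2π(1 − p)/n) Σ_{(i,j): i ≠ j, c(i) = c(j)} ζ_{i,j}; that is, the two-stage design removes exactly the within-cluster portion −(2π(1 − p)/n) Σ_{(i,j): i ≠ j, c(i) = c(j)} ζ_{i,j} of the bias of the Bernoulli design. -/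
open Finset

noncomputable section

/-- Combined estimator in the sub-population design:
`τ̂(p,q)(v,u) = (1/n) Σ_i [V_i W_i (Y_i(W)+D_i(W))/(pq) − V_i (1−W_i)(Y_i(W)+D_i(W))/(p(1−q))]`. -/
def tauHatSubComb {n : ℕ} (α β γ ζ : Fin n → Fin n → ℝ) (p q : ℝ)
    (v u : Fin n → Bool) : ℝ :=
  (1 / (n : ℝ)) * ∑ i,
    (ind (v i) * treatVU v u i *
        (Yagg α β γ ζ (treatVU v u) i + Dagg α β γ ζ (treatVU v u) i) / (p * q) -
      ind (v i) * (1 - treatVU v u i) *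
        (Yagg α β γ ζ (treatVU v u) i + Dagg α β γ ζ (treatVU v u) i) / (p * (1 - q)))

/-- Combined estimator in the two-stage cluster design, with `V_i = B_{c(i)}`. -/
def tauHatCluComb {n : ℕ} {C : Type} (α β γ ζ : Fin n → Fin n → ℝ) (c : Fin n → C)
    (p q : ℝ) (b : C → Bool) (u : Fin n → Bool) : ℝ :=
  (1 / (n : ℝ)) * ∑ i,
    (ind (b (c i)) * treatBU c b u i *
        (Yagg α β γ ζ (treatBU c b u) i + Dagg α β γ ζ (treatBU c b u) i) / (p * q) -
      ind (b (c i)) * (1 - treatBU c b u i) *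
        (Yagg α β γ ζ (treatBU c b u) i + Dagg α β γ ζ (treatBU c b u) i) /
          (p * (1 - q)))


section BernHelpers
variable {ι : Type*} [Fintype ι] [DecidableEq ι]

lemma sum_pi_prod (G : ι → Bool → ℝ) :
    ∑ x : ι → Bool, ∏ k, G k (x k) = ∏ k, ∑ b, G k b :=
  (Fintype.prod_sum G).symm

lemma marg1 (w : ι → Bool → ℝ) (hw : ∀ k, w k true + w k false = 1)
    (i : ι) (F : Bool → ℝ) :
    ∑ x : ι → Bool, (∏ k, w k (x k)) * F (x i) = ∑ a, w i a * F a := by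
  have key : ∀ x : ι → Bool, (∏ k, w k (x k)) * F (x i)
      = ∑ a : Bool, (∏ k, w k (x k) * (if k = i then (if x k = a then 1 else 0) else 1)) * F a := by
    intro x
    have h1 : ∀ a : Bool, (∏ k, w k (x k) * (if k = i then (if x k = a then (1:ℝ) else 0) else 1))
        = (∏ k, w k (x k)) * (if x i = a then 1 else 0) := by
      intro a
      rw [Finset.prod_mul_distrib]
      congr 1
      calc (∏ k, if k = i then (if x k = a then (1:ℝ) else 0) else 1)
          = (∏ k, if k = i then (if x i = a then (1:ℝ) else 0) else 1) := by
            refine Finset.prod_congr rfl fun k _ => ?_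
            by_cases h : k = i <;> simp [h]
        _ = (if x i = a then 1 else 0) := Fintype.prod_ite_eq' i _
    simp only [h1]
    cases hxi : x i <;> simp [Fintype.sum_bool]
  simp only [key]
  rw [Finset.sum_comm]
  refine Finset.sum_congr rfl fun a _ => ?_
  rw [← Finset.sum_mul,
    sum_pi_prod (fun k b => w k b * (if k = i then (if b = a then (1:ℝ) else 0) else 1))]
  congr 1
  calc (∏ k, ∑ b, w k b * (if k = i then (if b = a then (1:ℝ) else 0) else 1))
      = ∏ k, (if k = i then w i a else 1) := by
        refine Finset.prod_congr rfl fun k _ => ?_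
        by_cases h : k = i
        · subst h; cases a <;> simp [Fintype.sum_bool]
        · simp [h, Fintype.sum_bool, hw k]
    _ = w i a := Fintype.prod_ite_eq' i _

lemma marg2 (w : ι → Bool → ℝ) (hw : ∀ k, w k true + w k false = 1)
    (i j : ι) (hij : i ≠ j) (F : Bool → Bool → ℝ) :
    ∑ x : ι → Bool, (∏ k, w k (x k)) * F (x i) (x j)
      = ∑ a, ∑ b, w i a * w j b * F a b := by
  have key : ∀ x : ι → Bool, (∏ k, w k (x k)) * F (x i) (x j)
      = ∑ a : Bool, ∑ b : Bool,
          (∏ k, w k (x k) * (if k = i then (if x k = a then 1 else 0) else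
            if k = j then (if x k = b then 1 else 0) else 1)) * F a b := by
    intro x
    have h1 : ∀ a b : Bool, (∏ k, w k (x k) * (if k = i then (if x k = a then (1:ℝ) else 0) else
            if k = j then (if x k = b then 1 else 0) else 1))
        = (∏ k, w k (x k)) * ((if x i = a then 1 else 0) * (if x j = b then 1 else 0)) := by
      intro a b
      rw [Finset.prod_mul_distrib]
      congr 1
      calc (∏ k, (if k = i then (if x k = a then (1:ℝ) else 0) else
              if k = j then (if x k = b then 1 else 0) else 1))
          = ∏ k, (if k = i then (if x i = a then (1:ℝ) else 0) else 1) *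
              (if k = j then (if x j = b then (1:ℝ) else 0) else 1) := by
            refine Finset.prod_congr rfl fun k _ => ?_
            by_cases h : k = i
            · subst h; simp [hij]
            · by_cases h' : k = j
              · subst h'; simp [Ne.symm hij, h]
              · simp [h, h']
        _ = _ := by rw [Finset.prod_mul_distrib, Fintype.prod_ite_eq' i, Fintype.prod_ite_eq' j]
    simp only [h1]
    cases hxi : x i <;> cases hxj : x j <;> simp [Fintype.sum_bool]
  simp only [key]
  rw [Finset.sum_comm]
  refine Finset.sum_congr rfl fun a _ => ?_
  rw [Finset.sum_comm]
  refine Finset.sum_congr rfl fun b _ => ?_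
  rw [← Finset.sum_mul,
    sum_pi_prod (fun k b' => w k b' * (if k = i then (if b' = a then (1:ℝ) else 0) else
      if k = j then (if b' = b then 1 else 0) else 1))]
  congr 1
  calc (∏ k, ∑ b', w k b' * (if k = i then (if b' = a then (1:ℝ) else 0) else
          if k = j then (if b' = b then 1 else 0) else 1))
      = ∏ k, (if k = i then w i a else 1) * (if k = j then w j b else 1) := by
        refine Finset.prod_congr rfl fun k _ => ?_
        by_cases h : k = i
        · subst h; cases a <;> simp [Fintype.sum_bool, hij]
        · by_cases h' : k = j
          · subst h'; cases b <;> simp [Fintype.sum_bool, h]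
          · simp [h, h', Fintype.sum_bool, hw k]
    _ = w i a * w j b := by
        rw [Finset.prod_mul_distrib, Fintype.prod_ite_eq' i, Fintype.prod_ite_eq' j]

end BernHelpers

section DesignHelpers

/-- Bernoulli weight. -/
def wB (r : ℝ) (a : Bool) : ℝ := if a then r else 1 - r

lemma wB_norm (r : ℝ) : wB r true + wB r false = 1 := by simp [wB]

/-- Four-coin expectation functional. -/
def E4 (p q : ℝ) (P : Bool → Bool → Bool → Bool → ℝ) : ℝ :=
  ∑ a, ∑ a', ∑ b, ∑ b', wB p a * wB p a' * wB q b * wB q b' * P a b a' b'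

/-- Three-coin expectation functional (shared in-experiment coin). -/
def E3 (p q : ℝ) (P : Bool → Bool → Bool → Bool → ℝ) : ℝ :=
  ∑ a, ∑ b, ∑ b', wB p a * wB q b * wB q b' * P a b a b'

lemma expectVU_def (n : ℕ) (p q : ℝ) (f : (Fin n → Bool) → (Fin n → Bool) → ℝ) :
    expectVU n p q f = ∑ v : Fin n → Bool, ∑ u : Fin n → Bool,
      (∏ k, wB p (v k)) * (∏ k, wB q (u k)) * f v u := rfl

lemma expectBU_def (n : ℕ) {C : Type} [Fintype C] [DecidableEq C] (p q : ℝ)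
    (f : (C → Bool) → (Fin n → Bool) → ℝ) :
    expectBU n p q f = ∑ b : C → Bool, ∑ u : Fin n → Bool,
      (∏ k, wB p (b k)) * (∏ k, wB q (u k)) * f b u := rfl

lemma margVU (n : ℕ) (p q : ℝ) (i j : Fin n) (hij : i ≠ j)
    (P : Bool → Bool → Bool → Bool → ℝ) :
    expectVU n p q (fun v u => P (v i) (u i) (v j) (u j)) = E4 p q P := by
  calc expectVU n p q (fun v u => P (v i) (u i) (v j) (u j))
      = ∑ v : Fin n → Bool, (∏ k, wB p (v k)) *
          ∑ b, ∑ b', wB q b * wB q b' * P (v i) b (v j) b' := by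
        rw [expectVU_def]
        refine Finset.sum_congr rfl fun v _ => ?_
        rw [← marg2 (fun _ => wB q) (fun _ => wB_norm q) i j hij
          (fun b b' => P (v i) b (v j) b'), Finset.mul_sum]
        exact Finset.sum_congr rfl fun u _ => mul_assoc _ _ _
    _ = ∑ a, ∑ a', wB p a * wB p a' *
          ∑ b, ∑ b', wB q b * wB q b' * P a b a' b' :=
        marg2 (fun _ => wB p) (fun _ => wB_norm p) i j hij
          (fun a a' => ∑ b, ∑ b', wB q b * wB q b' * P a b a' b')
    _ = E4 p q P := by
        unfold E4
        refine Finset.sum_congr rfl fun a _ => Finset.sum_congr rfl fun a' _ => ?_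
        rw [Finset.mul_sum]
        refine Finset.sum_congr rfl fun b _ => ?_
        rw [Finset.mul_sum]
        exact Finset.sum_congr rfl fun b' _ => by ring

lemma margBU_ne (n : ℕ) {C : Type} [Fintype C] [DecidableEq C] (c : Fin n → C)
    (p q : ℝ) (i j : Fin n) (hij : i ≠ j) (hc : c i ≠ c j)
    (P : Bool → Bool → Bool → Bool → ℝ) :
    expectBU n p q (fun b u => P (b (c i)) (u i) (b (c j)) (u j)) = E4 p q P := by
  calc expectBU n p q (fun b u => P (b (c i)) (u i) (b (c j)) (u j))
      = ∑ b : C → Bool, (∏ k, wB p (b k)) *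
          ∑ t, ∑ t', wB q t * wB q t' * P (b (c i)) t (b (c j)) t' := by
        rw [expectBU_def]
        refine Finset.sum_congr rfl fun b _ => ?_
        rw [← marg2 (fun _ => wB q) (fun _ => wB_norm q) i j hij
          (fun t t' => P (b (c i)) t (b (c j)) t'), Finset.mul_sum]
        exact Finset.sum_congr rfl fun u _ => mul_assoc _ _ _
    _ = ∑ a, ∑ a', wB p a * wB p a' *
          ∑ t, ∑ t', wB q t * wB q t' * P a t a' t' :=
        marg2 (fun _ => wB p) (fun _ => wB_norm p) (c i) (c j) hc
          (fun a a' => ∑ t, ∑ t', wB q t * wB q t' * P a t a' t')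
    _ = E4 p q P := by
        unfold E4
        refine Finset.sum_congr rfl fun a _ => Finset.sum_congr rfl fun a' _ => ?_
        rw [Finset.mul_sum]
        refine Finset.sum_congr rfl fun b _ => ?_
        rw [Finset.mul_sum]
        exact Finset.sum_congr rfl fun b' _ => by ring

lemma margBU_eq (n : ℕ) {C : Type} [Fintype C] [DecidableEq C] (c : Fin n → C)
    (p q : ℝ) (i j : Fin n) (hij : i ≠ j) (hc : c j = c i)
    (P : Bool → Bool → Bool → Bool → ℝ) :
    expectBU n p q (fun b u => P (b (c i)) (u i) (b (c j)) (u j)) = E3 p q P := by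
  have hfun : (fun (b : C → Bool) (u : Fin n → Bool) => P (b (c i)) (u i) (b (c j)) (u j))
      = fun b u => P (b (c i)) (u i) (b (c i)) (u j) := by rw [hc]
  rw [hfun]
  calc expectBU n p q (fun b u => P (b (c i)) (u i) (b (c i)) (u j))
      = ∑ b : C → Bool, (∏ k, wB p (b k)) *
          ∑ t, ∑ t', wB q t * wB q t' * P (b (c i)) t (b (c i)) t' := by
        rw [expectBU_def]
        refine Finset.sum_congr rfl fun b _ => ?_
        rw [← marg2 (fun _ => wB q) (fun _ => wB_norm q) i j hij
          (fun t t' => P (b (c i)) t (b (c i)) t'), Finset.mul_sum]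
        exact Finset.sum_congr rfl fun u _ => mul_assoc _ _ _
    _ = ∑ a, wB p a * ∑ t, ∑ t', wB q t * wB q t' * P a t a t' :=
        marg1 (fun _ => wB p) (fun _ => wB_norm p) (c i)
          (fun a => ∑ t, ∑ t', wB q t * wB q t' * P a t a t')
    _ = E3 p q P := by
        unfold E3
        refine Finset.sum_congr rfl fun a _ => ?_
        rw [Finset.mul_sum]
        refine Finset.sum_congr rfl fun b _ => ?_
        rw [Finset.mul_sum]
        exact Finset.sum_congr rfl fun b' _ => by ring

lemma expect_const_mul {A B : Type*} [Fintype A] [Fintype B]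
    (wa : A → ℝ) (wb : B → ℝ) (r : ℝ) (f : A → B → ℝ) :
    ∑ x : A, ∑ y : B, wa x * wb y * (r * f x y)
      = r * ∑ x : A, ∑ y : B, wa x * wb y * f x y := by
  rw [Finset.mul_sum]
  refine Finset.sum_congr rfl fun x _ => ?_
  rw [Finset.mul_sum]
  exact Finset.sum_congr rfl fun y _ => by ring

lemma expect_sum {A B κ : Type*} [Fintype A] [Fintype B]
    (wa : A → ℝ) (wb : B → ℝ) (s : Finset κ) (g : κ → A → B → ℝ) :
    ∑ x : A, ∑ y : B, wa x * wb y * (∑ k ∈ s, g k x y)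
      = ∑ k ∈ s, ∑ x : A, ∑ y : B, wa x * wb y * g k x y := by
  have h : ∀ x : A, (∑ y : B, wa x * wb y * (∑ k ∈ s, g k x y))
      = ∑ k ∈ s, ∑ y : B, wa x * wb y * g k x y := by
    intro x
    have : ∀ y : B, wa x * wb y * (∑ k ∈ s, g k x y) = ∑ k ∈ s, wa x * wb y * g k x y :=
      fun y => Finset.mul_sum _ _ _
    simp only [this]
    exact Finset.sum_comm
  simp only [h]
  exact Finset.sum_comm

end DesignHelpers

section PairDecomp

variable {n : ℕ}

/-- The contribution of ordered pair `(i, j)` to unit `i`'s estimator term,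
as a function of the four coins of units `i` and `j`. -/
def pairP (α β γ ζ : Fin n → Fin n → ℝ) (p q : ℝ) (i j : Fin n)
    (a b a' b' : Bool) : ℝ :=
  ind a * ind (a && b) *
      ((α j i + β j i * ind (a' && b') + γ j i * ind (a && b) +
          ζ j i * ind (a' && b') * ind (a && b)) +
        (α i j + β i j * ind (a && b) + γ i j * ind (a' && b') +
          ζ i j * ind (a && b) * ind (a' && b'))) / (p * q) -
    ind a * (1 - ind (a && b)) *
      ((α j i + β j i * ind (a' && b') + γ j i * ind (a && b) +
          ζ j i * ind (a' && b') * ind (a && b)) +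
        (α i j + β i j * ind (a && b) + γ i j * ind (a' && b') +
          ζ i j * ind (a && b) * ind (a' && b'))) / (p * (1 - q))

lemma sub_expand (α β γ ζ : Fin n → Fin n → ℝ) (p q : ℝ) (v u : Fin n → Bool) :
    tauHatSubComb α β γ ζ p q v u
      = (1 / (n : ℝ)) * ∑ i, ∑ j ∈ ({i}ᶜ : Finset (Fin n)),
          pairP α β γ ζ p q i j (v i) (u i) (v j) (u j) := by
  unfold tauHatSubComb Yagg Dagg
  congr 1
  refine Finset.sum_congr rfl fun i _ => ?_
  rw [← Finset.sum_add_distrib, Finset.mul_sum, Finset.mul_sum, Finset.sum_div,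
    Finset.sum_div, ← Finset.sum_sub_distrib]
  refine Finset.sum_congr rfl fun j _ => ?_
  simp only [pairP, zDyad, treatVU]

lemma clu_expand {C : Type} (α β γ ζ : Fin n → Fin n → ℝ) (c : Fin n → C)
    (p q : ℝ) (b : C → Bool) (u : Fin n → Bool) :
    tauHatCluComb α β γ ζ c p q b u
      = (1 / (n : ℝ)) * ∑ i, ∑ j ∈ ({i}ᶜ : Finset (Fin n)),
          pairP α β γ ζ p q i j (b (c i)) (u i) (b (c j)) (u j) := by
  unfold tauHatCluComb Yagg Dagg
  congr 1
  refine Finset.sum_congr rfl fun i _ => ?_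
  rw [← Finset.sum_add_distrib, Finset.mul_sum, Finset.mul_sum, Finset.sum_div,
    Finset.sum_div, ← Finset.sum_sub_distrib]
  refine Finset.sum_congr rfl fun j _ => ?_
  simp only [pairP, zDyad, treatBU]

lemma expectVU_estimator (α β γ ζ : Fin n → Fin n → ℝ) (p q : ℝ) :
    expectVU n p q (tauHatSubComb α β γ ζ p q)
      = (1 / (n : ℝ)) * ∑ i, ∑ j ∈ ({i}ᶜ : Finset (Fin n)),
          E4 p q (pairP α β γ ζ p q i j) := by
  have hf : tauHatSubComb α β γ ζ p q
      = fun v u => (1 / (n : ℝ)) * ∑ i, ∑ j ∈ ({i}ᶜ : Finset (Fin n)),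
          pairP α β γ ζ p q i j (v i) (u i) (v j) (u j) :=
    funext fun v => funext fun u => sub_expand α β γ ζ p q v u
  rw [hf, expectVU_def, expect_const_mul, expect_sum]
  congr 1
  refine Finset.sum_congr rfl fun i _ => ?_
  rw [expect_sum]
  refine Finset.sum_congr rfl fun j hj => ?_
  have hij : i ≠ j := fun h => by simp [h] at hj
  rw [← margVU n p q i j hij (pairP α β γ ζ p q i j), expectVU_def]

lemma expectBU_estimator {C : Type} [Fintype C] [DecidableEq C]
    (α β γ ζ : Fin n → Fin n → ℝ) (c : Fin n → C) (p q : ℝ) :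
    expectBU n p q (tauHatCluComb α β γ ζ c p q)
      = (1 / (n : ℝ)) * ∑ i, ∑ j ∈ ({i}ᶜ : Finset (Fin n)),
          (if c j = c i then E3 p q (pairP α β γ ζ p q i j)
            else E4 p q (pairP α β γ ζ p q i j)) := by
  have hf : tauHatCluComb α β γ ζ c p q
      = fun b u => (1 / (n : ℝ)) * ∑ i, ∑ j ∈ ({i}ᶜ : Finset (Fin n)),
          pairP α β γ ζ p q i j (b (c i)) (u i) (b (c j)) (u j) :=
    funext fun b => funext fun u => clu_expand α β γ ζ c p q b u
  rw [hf, expectBU_def, expect_const_mul, expect_sum]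
  congr 1
  refine Finset.sum_congr rfl fun i _ => ?_
  rw [expect_sum]
  refine Finset.sum_congr rfl fun j hj => ?_
  have hij : i ≠ j := fun h => by simp [h] at hj
  by_cases hc : c j = c i
  · rw [if_pos hc, ← margBU_eq n c p q i j hij hc (pairP α β γ ζ p q i j), expectBU_def]
  · rw [if_neg hc,
      ← margBU_ne n c p q i j hij (fun h => hc h.symm) (pairP α β γ ζ p q i j), expectBU_def]

lemma pair_diff (α β γ ζ : Fin n → Fin n → ℝ) (p q : ℝ)
    (hp0 : 0 < p) (hq0 : 0 < q) (hq1 : q < 1) (i j : Fin n) :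
    E3 p q (pairP α β γ ζ p q i j) - E4 p q (pairP α β γ ζ p q i j)
      = q * (1 - p) * (ζ j i + ζ i j) := by
  have hp : p ≠ 0 := ne_of_gt hp0
  have hq : q ≠ 0 := ne_of_gt hq0
  have h1q : (1 : ℝ) - q ≠ 0 := sub_ne_zero.mpr (ne_of_gt hq1)
  simp [E3, E4, pairP, wB, ind, Fintype.sum_bool]
  field_simp
  ring

end PairDecomp


/-- Bias reduction of the two-stage design: For the same population,
parameters, in-experiment probability `p`, and treatment probability `q`,
`E[τ̂_c(p,q)] − E[τ̂(p,q)] = (2q(1 − p)/n) Σ_{i ≠ j, c(i) = c(j)} ζ_{i,j}`;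
equivalently, the same identity holds for the biases with respect to the total
treatment effect `τ = (1/n) Σ_j (Y_j(1) − Y_j(0))`. -/
theorem bias_reduction_two_stage
    (n : ℕ) (hn : 1 ≤ n) (α β γ ζ : Fin n → Fin n → ℝ)
    (C : Type) [Fintype C] [DecidableEq C] (c : Fin n → C)
    (p q : ℝ) (hp0 : 0 < p) (hp1 : p ≤ 1) (hq0 : 0 < q) (hq1 : q < 1) :
    expectBU n p q (tauHatCluComb α β γ ζ c p q) -
        expectVU n p q (tauHatSubComb α β γ ζ p q) =
      (2 * q * (1 - p) / (n : ℝ)) *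
        ∑ j, ∑ i ∈ ({j}ᶜ : Finset (Fin n)).filter (fun i => c i = c j), ζ i j ∧
    (expectBU n p q (tauHatCluComb α β γ ζ c p q) -
        (1 / (n : ℝ)) *
          ∑ j, (Yagg α β γ ζ (fun _ => (1 : ℝ)) j - Yagg α β γ ζ (fun _ => (0 : ℝ)) j)) =
      (expectVU n p q (tauHatSubComb α β γ ζ p q) -
        (1 / (n : ℝ)) *
          ∑ j, (Yagg α β γ ζ (fun _ => (1 : ℝ)) j - Yagg α β γ ζ (fun _ => (0 : ℝ)) j)) +
        (2 * q * (1 - p) / (n : ℝ)) *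
          ∑ j, ∑ i ∈ ({j}ᶜ : Finset (Fin n)).filter (fun i => c i = c j), ζ i j := by
  have hmain : expectBU n p q (tauHatCluComb α β γ ζ c p q) -
      expectVU n p q (tauHatSubComb α β γ ζ p q) =
      (2 * q * (1 - p) / (n : ℝ)) *
        ∑ j, ∑ i ∈ ({j}ᶜ : Finset (Fin n)).filter (fun i => c i = c j), ζ i j := by
    rw [expectBU_estimator, expectVU_estimator, ← mul_sub, ← Finset.sum_sub_distrib]
    have h1 : ∀ i : Fin n,
        ((∑ j ∈ ({i}ᶜ : Finset (Fin n)),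
            (if c j = c i then E3 p q (pairP α β γ ζ p q i j)
              else E4 p q (pairP α β γ ζ p q i j))) -
          ∑ j ∈ ({i}ᶜ : Finset (Fin n)), E4 p q (pairP α β γ ζ p q i j))
        = q * (1 - p) *
            ((∑ j ∈ ({i}ᶜ : Finset (Fin n)).filter (fun j => c j = c i), ζ j i) +
              ∑ j ∈ ({i}ᶜ : Finset (Fin n)).filter (fun j => c j = c i), ζ i j) := by
      intro i
      rw [← Finset.sum_sub_distrib]
      calc (∑ j ∈ ({i}ᶜ : Finset (Fin n)),
              ((if c j = c i then E3 p q (pairP α β γ ζ p q i j)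
                else E4 p q (pairP α β γ ζ p q i j)) - E4 p q (pairP α β γ ζ p q i j)))
          = ∑ j ∈ ({i}ᶜ : Finset (Fin n)),
              (if c j = c i then q * (1 - p) * (ζ j i + ζ i j) else 0) := by
            refine Finset.sum_congr rfl fun j _ => ?_
            by_cases hc : c j = c i
            · rw [if_pos hc, if_pos hc, pair_diff α β γ ζ p q hp0 hq0 hq1 i j]
            · rw [if_neg hc, if_neg hc, sub_self]
        _ = ∑ j ∈ ({i}ᶜ : Finset (Fin n)).filter (fun j => c j = c i),
              q * (1 - p) * (ζ j i + ζ i j) := (Finset.sum_filter _ _).symm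
        _ = q * (1 - p) * ∑ j ∈ ({i}ᶜ : Finset (Fin n)).filter (fun j => c j = c i),
              (ζ j i + ζ i j) := (Finset.mul_sum _ _ _).symm
        _ = _ := by rw [Finset.sum_add_distrib]
    simp only [h1]
    rw [← Finset.mul_sum, Finset.sum_add_distrib]
    have hA : (∑ i, ∑ j ∈ ({i}ᶜ : Finset (Fin n)).filter (fun j => c j = c i), ζ j i)
        = ∑ j, ∑ i ∈ ({j}ᶜ : Finset (Fin n)).filter (fun i => c i = c j), ζ i j := rfl
    have hset : ∀ x : Fin n, ({x}ᶜ : Finset (Fin n)).filter (fun y => c y = c x)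
        = univ.filter (fun y => ¬ y = x ∧ c y = c x) := by
      intro x; ext y; simp
    have hB : (∑ i, ∑ j ∈ ({i}ᶜ : Finset (Fin n)).filter (fun j => c j = c i), ζ i j)
        = ∑ j, ∑ i ∈ ({j}ᶜ : Finset (Fin n)).filter (fun i => c i = c j), ζ i j := by
      calc (∑ i, ∑ j ∈ ({i}ᶜ : Finset (Fin n)).filter (fun j => c j = c i), ζ i j)
          = ∑ i, ∑ j, (if ¬ j = i ∧ c j = c i then ζ i j else 0) := by
            refine Finset.sum_congr rfl fun i _ => ?_
            rw [hset i, Finset.sum_filter]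
        _ = ∑ j, ∑ i, (if ¬ j = i ∧ c j = c i then ζ i j else 0) := Finset.sum_comm
        _ = ∑ j, ∑ i, (if ¬ i = j ∧ c i = c j then ζ i j else 0) := by
            refine Finset.sum_congr rfl fun j _ => Finset.sum_congr rfl fun i _ => ?_
            refine if_congr ?_ rfl rfl
            constructor
            · rintro ⟨h, h'⟩; exact ⟨fun e => h e.symm, h'.symm⟩
            · rintro ⟨h, h'⟩; exact ⟨fun e => h e.symm, h'.symm⟩
        _ = _ := by
            refine Finset.sum_congr rfl fun j _ => ?_
            rw [hset j, Finset.sum_filter]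
    rw [hA, hB]
    ring
  refine ⟨hmain, by linarith [hmain]⟩
end
end
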